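/- arXiv:math/0303245 — 7 statements merged into one kernel-verified Lean document; each statement's English description precedes it below -/
import Mathlib

section
/- A sequence of non-negative integers d = (d_1, ..., d_k) is a Pieri sequence with maximum at position j (i.e., (d_1,...,d_j) is weakly increasing, (d_j,...,d_k) is weakly decreasing, and with the convention d_0 = d_{k+1} = 0 one has |d_i - d_{i+1}| ≤ 1 for all 0 ≤ i ≤ k) if and only if d_j + Σ_{i=1}^{k-1} d_i d_{i+1} - Σ_{i=1}^{k} d_i^2 ≥ 0. Moreover, in this case the inequality holds with equality. -/
/-- `d` (with the conventions `d 0 = 0`, `d (k+1) = 0`) is a Pieri sequence with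
maximum at position `j`: weakly increasing up to `j`, weakly decreasing from `j` on,
and consecutive differences at most `1` in absolute value. -/
def IsPieriSeq (k j : ℕ) (d : ℕ → ℕ) : Prop :=
  (∀ i, i < j → d i ≤ d (i + 1)) ∧
  (∀ i, j ≤ i → i ≤ k → d (i + 1) ≤ d i) ∧
  (∀ i, i ≤ k → |(d i : ℤ) - (d (i + 1) : ℤ)| ≤ 1)

theorem pieri_seq_iff (k j : ℕ) (d : ℕ → ℕ)
    (hj1 : 1 ≤ j) (hjk : j ≤ k)
    (h0 : d 0 = 0) (hk1 : d (k + 1) = 0) :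
    (IsPieriSeq k j d ↔
      0 ≤ (d j : ℤ) + (∑ i ∈ Finset.Icc 1 (k - 1), (d i : ℤ) * (d (i + 1) : ℤ))
        - ∑ i ∈ Finset.Icc 1 k, (d i : ℤ) ^ 2) ∧
    (IsPieriSeq k j d →
      (d j : ℤ) + (∑ i ∈ Finset.Icc 1 (k - 1), (d i : ℤ) * (d (i + 1) : ℤ))
        - ∑ i ∈ Finset.Icc 1 k, (d i : ℤ) ^ 2 = 0) := by
  obtain ⟨m, rfl⟩ : ∃ m, k = m + 1 := ⟨k - 1, by omega⟩
  have hk1' : d (m + 2) = 0 := hk1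
  have hk2 : d (1 + (m + 1)) = 0 := by rw [Nat.add_comm]; exact hk1'
  set f : ℕ → ℤ := fun i => (d (i+1) : ℤ) - d i with hfdef
  have htel : ∀ n, ∑ i ∈ Finset.range n, f i = (d n : ℤ) := fun n => by
    show (∑ i ∈ Finset.range n, ((d (i+1):ℤ) - (d i:ℤ))) = _
    rw [Finset.sum_range_sub (fun i => (d i : ℤ)) n, h0]
    simp
  have e1 : ∑ i ∈ Finset.range (m+2), ((d (i+1):ℤ))^2
      = ∑ i ∈ Finset.Icc 1 (m+1), ((d i:ℤ))^2 := by
    rw [← Finset.Ico_add_one_right_eq_Icc, Finset.sum_Ico_eq_sum_range, Finset.sum_range_succ]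
    simp [hk1', hk2, add_comm]
  have e2 : ∑ i ∈ Finset.range (m+2), ((d i:ℤ))^2
      = ∑ i ∈ Finset.Icc 1 (m+1), ((d i:ℤ))^2 := by
    rw [← Finset.Ico_add_one_right_eq_Icc, Finset.sum_Ico_eq_sum_range, Finset.sum_range_succ']
    simp [h0, add_comm]
  have e3 : ∑ i ∈ Finset.range (m+2), (d i:ℤ)*(d (i+1):ℤ)
      = ∑ i ∈ Finset.Icc 1 (m+1-1), (d i:ℤ)*(d (i+1):ℤ) := by
    rw [← Finset.Ico_add_one_right_eq_Icc, Finset.sum_Ico_eq_sum_range, Finset.sum_range_succ', Finset.sum_range_succ]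
    simp [h0, hk1', hk2, add_comm]
  have hkey : ∑ i ∈ Finset.range (m+2), f i ^ 2
      = 2 * (∑ i ∈ Finset.Icc 1 (m+1), ((d i:ℤ))^2)
        - 2 * (∑ i ∈ Finset.Icc 1 (m+1-1), (d i:ℤ)*(d (i+1):ℤ)) := by
    have hterm : ∀ i, f i ^ 2
        = ((d (i+1):ℤ))^2 + ((d i:ℤ))^2 - 2*((d i:ℤ)*(d (i+1):ℤ)) := by
      intro i; simp only [hfdef]; ring
    rw [Finset.sum_congr rfl (fun i _ => hterm i), Finset.sum_sub_distrib,
      Finset.sum_add_distrib, ← Finset.mul_sum, e1, e2, e3]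
    ring
  have habs : ∀ i, |f i| ≤ f i ^ 2 := by
    intro i
    rcases (abs_nonneg (f i)).eq_or_lt with h | h
    · rw [← h]; positivity
    · have h1 : 1 ≤ |f i| := h
      nlinarith [sq_abs (f i)]
  have hsplit : (∑ i ∈ Finset.range j, |f i|) + ∑ i ∈ Finset.Ico j (m+2), |f i|
      = ∑ i ∈ Finset.range (m+2), |f i| := by
    rw [Finset.range_eq_Ico, Finset.range_eq_Ico]
    exact Finset.sum_Ico_consecutive _ (Nat.zero_le j) (by omega)
  have hIco : ∑ i ∈ Finset.Ico j (m+2), f i = -(d j : ℤ) := by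
    rw [Finset.sum_Ico_eq_sub _ (by omega), htel, htel, hk1']
    ring
  have hTl : (d j:ℤ) ≤ ∑ i ∈ Finset.range j, |f i| := by
    rw [← htel j]
    exact le_trans (le_abs_self _) (Finset.abs_sum_le_sum_abs _ _)
  have hTr : (d j:ℤ) ≤ ∑ i ∈ Finset.Ico j (m+2), |f i| := by
    have h1 : (d j : ℤ) = |∑ i ∈ Finset.Ico j (m+2), f i| := by
      rw [hIco, abs_neg, abs_of_nonneg (by positivity)]
    rw [h1]
    exact Finset.abs_sum_le_sum_abs _ _
  have hTS : ∑ i ∈ Finset.range (m+2), |f i| ≤ ∑ i ∈ Finset.range (m+2), f i ^ 2 :=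
    Finset.sum_le_sum (fun i _ => habs i)
  -- forward: Pieri implies equality
  have himp : IsPieriSeq (m+1) j d →
      (d j : ℤ) + (∑ i ∈ Finset.Icc 1 (m + 1 - 1), (d i : ℤ) * (d (i + 1) : ℤ))
        - ∑ i ∈ Finset.Icc 1 (m+1), (d i : ℤ) ^ 2 = 0 := by
    rintro ⟨hinc, hdec, hbd⟩
    have hS2 : ∑ i ∈ Finset.range (m+2), f i ^ 2 = 2 * (d j : ℤ) := by
      have hsq : (∑ i ∈ Finset.range j, f i ^ 2) + ∑ i ∈ Finset.Ico j (m+2), f i ^ 2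
          = ∑ i ∈ Finset.range (m+2), f i ^ 2 := by
        rw [Finset.range_eq_Ico, Finset.range_eq_Ico]
        exact Finset.sum_Ico_consecutive _ (Nat.zero_le j) (by omega)
      have hl : ∑ i ∈ Finset.range j, f i ^ 2 = ∑ i ∈ Finset.range j, f i := by
        refine Finset.sum_congr rfl fun i hi => ?_
        have hij := Finset.mem_range.1 hi
        have h1 : 0 ≤ f i := sub_nonneg.2 (by exact_mod_cast hinc i hij)
        have h2 := abs_le.1 (hbd i (by omega))
        have : f i = 0 ∨ f i = 1 := by simp only [hfdef] at h1 ⊢; omega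
        rcases this with h | h <;> rw [h] <;> ring
      have hr : ∑ i ∈ Finset.Ico j (m+2), f i ^ 2
          = ∑ i ∈ Finset.Ico j (m+2), (-f i) := by
        refine Finset.sum_congr rfl fun i hi => ?_
        obtain ⟨hij, him⟩ := Finset.mem_Ico.1 hi
        have h1 : f i ≤ 0 := sub_nonpos.2 (by exact_mod_cast hdec i hij (by omega))
        have h2 := abs_le.1 (hbd i (by omega))
        have : f i = 0 ∨ f i = -1 := by simp only [hfdef] at h1 ⊢; omega
        rcases this with h | h <;> rw [h] <;> ring
      rw [← hsq, hl, hr, htel, Finset.sum_neg_distrib, hIco]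
      ring
    linarith [hkey, hS2]
  constructor
  · constructor
    · intro h; rw [himp h]
    · intro hE
      have hS2 : ∑ i ∈ Finset.range (m+2), f i ^ 2 ≤ 2 * (d j : ℤ) := by
        linarith [hkey, hE]
      have hTlEq : ∑ i ∈ Finset.range j, |f i| = (d j : ℤ) := by linarith
      have hTrEq : ∑ i ∈ Finset.Ico j (m+2), |f i| = (d j : ℤ) := by linarith
      have hST : ∑ i ∈ Finset.range (m+2), |f i|
          = ∑ i ∈ Finset.range (m+2), f i ^ 2 := by linarith
      have hsqabs : ∀ i ∈ Finset.range (m+2), f i ^ 2 - |f i| = 0 := by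
        have h0' : ∑ i ∈ Finset.range (m+2), (f i ^ 2 - |f i|) = 0 := by
          rw [Finset.sum_sub_distrib, hST]; ring
        exact fun i hi => (Finset.sum_eq_zero_iff_of_nonneg
          (fun i _ => sub_nonneg.2 (habs i))).1 h0' i hi
      have hbd : ∀ i, i ≤ m + 1 → |(d i : ℤ) - (d (i + 1) : ℤ)| ≤ 1 := by
        intro i hi
        have h1 := hsqabs i (Finset.mem_range.2 (by omega))
        have h2 : |f i| = |f i| ^ 2 := by rw [sq_abs]; linarith
        have h3 : |f i| ≤ 1 := by nlinarith [abs_nonneg (f i)]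
        rw [abs_sub_comm]
        exact h3
      have hfl : ∀ i ∈ Finset.range j, |f i| - f i = 0 := by
        have h0' : ∑ i ∈ Finset.range j, (|f i| - f i) = 0 := by
          rw [Finset.sum_sub_distrib, htel, hTlEq]; ring
        exact fun i hi => (Finset.sum_eq_zero_iff_of_nonneg
          (fun i _ => sub_nonneg.2 (le_abs_self _))).1 h0' i hi
      have hfr : ∀ i ∈ Finset.Ico j (m+2), |f i| + f i = 0 := by
        have h0' : ∑ i ∈ Finset.Ico j (m+2), (|f i| + f i) = 0 := by
          rw [Finset.sum_add_distrib, hIco, hTrEq]; ring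
        exact fun i hi => (Finset.sum_eq_zero_iff_of_nonneg
          (fun i _ => by linarith [neg_abs_le (f i)])).1 h0' i hi
      refine ⟨fun i hi => ?_, fun i hij him => ?_, hbd⟩
      · have h1 := hfl i (Finset.mem_range.2 hi)
        have h2 : 0 ≤ f i := by
          have := abs_nonneg (f i); linarith
        exact_mod_cast sub_nonneg.1 h2
      · have h1 := hfr i (Finset.mem_Ico.2 ⟨hij, by omega⟩)
        have h2 : f i ≤ 0 := by
          have := abs_nonneg (f i); linarith
        exact_mod_cast sub_nonpos.1 h2
  · exact himp
end

section
/- Let α = s_r s_{r+1} ⋯ s_m ∈ S_n be a cyclic permutation of length ℓ = m - r + 1. Suppose u →_α w via sequences b_1,...,b_ℓ and c_1,...,c_ℓ satisfying: (1) b_i ≤ m < c_i for all i; (2) w = u t_{b_1 c_1} ⋯ t_{b_ℓ c_ℓ}; (3) ℓ(u t_{b_1 c_1} ⋯ t_{b_i c_i}) = ℓ(u) + i for all i; (4) the b_i are distinct. If c_i ≠ c_{i+1} for some i, then the sequences obtained by interchanging the i-th and (i+1)-th entries of both b and c also satisfy conditions (1)–(4). -/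
/-- Number of inversions of `u` among positions `1,…,n` (the Coxeter length
when `u` fixes everything outside `{1,…,n}`). -/
def invLen (n : ℕ) (u : Equiv.Perm ℕ) : ℕ :=
  (((Finset.Icc 1 n) ×ˢ (Finset.Icc 1 n)).filter
    (fun p => p.1 < p.2 ∧ u p.2 < u p.1)).card

/-- The partial products `u · t_{b₁c₁} ⋯ t_{bᵢcᵢ}` (indices of `b`, `c` start at 1). -/
def partialProd (u : Equiv.Perm ℕ) (b c : ℕ → ℕ) : ℕ → Equiv.Perm ℕ
  | 0 => u
  | (i + 1) => partialProd u b c i * Equiv.swap (b (i + 1)) (c (i + 1))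

/-- The sequences `b, c` witness `u →_α w` in `S_n`, where `α = s_r ⋯ s_m` has
length `l = m - r + 1`:  (1) `bᵢ ≤ m < cᵢ` (within `{1,…,n}`);
(2) `w = u t_{b₁c₁} ⋯ t_{b_l c_l}`; (3) each partial product increases the length
by exactly one; (4) the `bᵢ` are distinct. -/
def ArrowWitness (n m l : ℕ) (u w : Equiv.Perm ℕ) (b c : ℕ → ℕ) : Prop :=
  (∀ i, 1 ≤ i → i ≤ l → 1 ≤ b i ∧ b i ≤ m ∧ m < c i ∧ c i ≤ n) ∧
  w = partialProd u b c l ∧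
  (∀ i, 1 ≤ i → i ≤ l → invLen n (partialProd u b c i) = invLen n u + i) ∧
  (∀ i j, 1 ≤ i → i < j → j ≤ l → b i ≠ b j)

/-- The Pieri relation `u →_α w` for `α = s_r s_{r+1} ⋯ s_m`. -/
def PieriArrow (n r m : ℕ) (u w : Equiv.Perm ℕ) : Prop :=
  ∃ b c : ℕ → ℕ, ArrowWitness n m (m - r + 1) u w b c

open Finset in
lemma invLen_mul_swap (n a b : ℕ) (v : Equiv.Perm ℕ) (ha : 1 ≤ a) (hab : a < b)
    (hb : b ≤ n) (hv : v a < v b) :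
    invLen n (v * Equiv.swap a b)
      = invLen n v + 1
        + 2 * ((Finset.Ioo a b).filter (fun k => v a < v k ∧ v k < v b)).card := by
  set σ := Equiv.swap a b with hσ
  have hσa : σ a = b := Equiv.swap_apply_left a b
  have hσb : σ b = a := Equiv.swap_apply_right a b
  have hσo : ∀ x, x ≠ a → x ≠ b → σ x = x := fun x h1 h2 => Equiv.swap_apply_of_ne_of_ne h1 h2
  have hσσ : ∀ x, σ (σ x) = x := fun x => Equiv.swap_apply_self a b x
  set v' := v * σ with hv'
  have hv'app : ∀ x, v' x = v (σ x) := fun _ => rfl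
  set I1 := (Finset.Icc 1 n ×ˢ Finset.Icc 1 n).filter (fun p => p.1 < p.2 ∧ v p.2 < v p.1) with hI1
  set I2 := (Finset.Icc 1 n ×ˢ Finset.Icc 1 n).filter (fun p => p.1 < p.2 ∧ v' p.2 < v' p.1) with hI2
  have einv1 : invLen n v = I1.card := rfl
  have einv2 : invLen n v' = I2.card := rfl
  have hσIcc : ∀ x, x ∈ Finset.Icc 1 n → σ x ∈ Finset.Icc 1 n := by
    intro x hx
    rcases eq_or_ne x a with rfl | h1
    · rw [hσa]; exact Finset.mem_Icc.mpr ⟨by omega, hb⟩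
    rcases eq_or_ne x b with rfl | h2
    · rw [hσb]; exact Finset.mem_Icc.mpr ⟨ha, by omega⟩
    · rw [hσo x h1 h2]; exact hx
  -- Step A : bijection of non-reversed parts
  have hmap : ∀ (w w' : Equiv.Perm ℕ), (∀ x, w' x = w (σ x)) →
      ∀ p ∈ ((Finset.Icc 1 n ×ˢ Finset.Icc 1 n).filter (fun p => p.1 < p.2 ∧ w' p.2 < w' p.1)).filter
          (fun p => ¬ σ p.2 < σ p.1),
        (σ p.1, σ p.2) ∈ ((Finset.Icc 1 n ×ˢ Finset.Icc 1 n).filter (fun p => p.1 < p.2 ∧ w p.2 < w p.1)).filter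
          (fun p => ¬ σ p.2 < σ p.1) := by
    rintro w w' hww ⟨x, y⟩ hp
    simp only [Finset.mem_filter, Finset.mem_product] at hp ⊢
    obtain ⟨⟨⟨hx, hy⟩, hxy, hvyx⟩, hrev⟩ := hp
    have hne : σ x ≠ σ y := fun h => by
      have := σ.injective h; omega
    have hlt : σ x < σ y := by omega
    refine ⟨⟨⟨hσIcc x hx, hσIcc y hy⟩, hlt, ?_⟩, ?_⟩
    · rw [← hww x, ← hww y]; exact hvyx
    · rw [hσσ, hσσ]; omega
  have hvv' : ∀ x, v x = v' (σ x) := fun x => by rw [hv'app, hσσ]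
  have hbij : (I2.filter (fun p => ¬ σ p.2 < σ p.1)).card
      = (I1.filter (fun p => ¬ σ p.2 < σ p.1)).card := by
    refine Finset.card_bij' (fun p _ => (σ p.1, σ p.2)) (fun p _ => (σ p.1, σ p.2))
      (hmap v v' hv'app) (hmap v' v hvv') ?_ ?_
    · rintro ⟨x, y⟩ _; simp [hσσ]
    · rintro ⟨x, y⟩ _; simp [hσσ]
  -- explicit description of reversed parts
  have hC1 : I1.filter (fun p => σ p.2 < σ p.1)
      = ((Finset.Ioo a b).filter (fun k => v k < v a)).image (fun k => (a, k))
        ∪ ((Finset.Ioo a b).filter (fun k => v b < v k)).image (fun k => (k, b)) := by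
    rw [hI1]
    ext ⟨x, y⟩
    simp only [Finset.mem_filter, Finset.mem_product, Finset.mem_Icc, Finset.mem_union,
      Finset.mem_image, Finset.mem_Ioo, Prod.mk.injEq]
    constructor
    · rintro ⟨⟨⟨⟨hx1, hxn⟩, hy1, hyn⟩, hxy, hvyx⟩, hrev⟩
      by_cases hxa : x = a
      · by_cases hyb : y = b
        · exfalso; rw [hxa, hyb] at hvyx; omega
        · have hy : σ y = y := hσo y (by omega) hyb
          rw [hxa, hσa, hy] at hrev
          refine Or.inl ⟨y, ⟨⟨by omega, hrev⟩, ?_⟩, hxa.symm, rfl⟩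
          rw [← hxa]; exact hvyx
      · by_cases hxb : x = b
        · exfalso
          by_cases hya : y = a
          · omega
          · by_cases hyb : y = b
            · omega
            · rw [hxb, hσb, hσo y hya hyb] at hrev; omega
        · have hx : σ x = x := hσo x hxa hxb
          by_cases hya : y = a
          · exfalso; rw [hya, hσa, hx] at hrev; omega
          · by_cases hyb : y = b
            · rw [hyb, hσb, hx] at hrev
              refine Or.inr ⟨x, ⟨⟨hrev, by omega⟩, ?_⟩, rfl, hyb.symm⟩
              rw [← hyb]; exact hvyx
            · exfalso; rw [hσo y hya hyb, hx] at hrev; omega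
    · rintro (⟨k, ⟨⟨hk1, hk2⟩, hvk⟩, rfl, rfl⟩ | ⟨k, ⟨⟨hk1, hk2⟩, hvk⟩, rfl, rfl⟩)
      · refine ⟨⟨⟨⟨ha, by omega⟩, by omega, by omega⟩, hk1, hvk⟩, ?_⟩
        rw [hσa, hσo k (by omega) (by omega)]; exact hk2
      · refine ⟨⟨⟨⟨by omega, by omega⟩, by omega, hb⟩, hk2, hvk⟩, ?_⟩
        rw [hσb, hσo k (by omega) (by omega)]; exact hk1
  have hC2 : I2.filter (fun p => σ p.2 < σ p.1)
      = insert (a, b)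
          (((Finset.Ioo a b).filter (fun k => v k < v b)).image (fun k => (a, k))
            ∪ ((Finset.Ioo a b).filter (fun k => v a < v k)).image (fun k => (k, b))) := by
    rw [hI2]
    ext ⟨x, y⟩
    simp only [Finset.mem_filter, Finset.mem_product, Finset.mem_Icc, Finset.mem_union,
      Finset.mem_insert, Finset.mem_image, Finset.mem_Ioo, Prod.mk.injEq, hv'app]
    constructor
    · rintro ⟨⟨⟨⟨hx1, hxn⟩, hy1, hyn⟩, hxy, hvyx⟩, hrev⟩
      by_cases hxa : x = a
      · by_cases hyb : y = b
        · exact Or.inl ⟨hxa, hyb⟩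
        · have hy : σ y = y := hσo y (by omega) hyb
          rw [hxa, hσa, hy] at hrev hvyx
          exact Or.inr (Or.inl ⟨y, ⟨⟨by omega, hrev⟩, hvyx⟩, hxa.symm, rfl⟩)
      · by_cases hxb : x = b
        · exfalso
          by_cases hya : y = a
          · omega
          · by_cases hyb : y = b
            · omega
            · rw [hxb, hσb, hσo y hya hyb] at hrev; omega
        · have hx : σ x = x := hσo x hxa hxb
          by_cases hya : y = a
          · exfalso; rw [hya, hσa, hx] at hrev; omega
          · by_cases hyb : y = b
            · rw [hyb, hσb, hx] at hrev hvyx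
              exact Or.inr (Or.inr ⟨x, ⟨⟨hrev, by omega⟩, hvyx⟩, rfl, hyb.symm⟩)
            · exfalso; rw [hσo y hya hyb, hx] at hrev; omega
    · rintro (⟨rfl, rfl⟩ | ⟨k, ⟨⟨hk1, hk2⟩, hvk⟩, rfl, rfl⟩ | ⟨k, ⟨⟨hk1, hk2⟩, hvk⟩, rfl, rfl⟩)
      · refine ⟨⟨⟨⟨ha, by omega⟩, by omega, hb⟩, hab, ?_⟩, ?_⟩
        · rw [hσa, hσb]; exact hv
        · rw [hσa, hσb]; exact hab
      · have hk : σ k = k := hσo k (by omega) (by omega)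
        refine ⟨⟨⟨⟨ha, by omega⟩, by omega, by omega⟩, hk1, ?_⟩, ?_⟩
        · rw [hσa, hk]; exact hvk
        · rw [hσa, hk]; exact hk2
      · have hk : σ k = k := hσo k (by omega) (by omega)
        refine ⟨⟨⟨⟨by omega, by omega⟩, by omega, hb⟩, hk2, ?_⟩, ?_⟩
        · rw [hσb, hk]; exact hvk
        · rw [hσb, hk]; exact hk1
  -- cards
  have hinj1 : Function.Injective (fun k : ℕ => (a, k)) := fun x y h => by
    simpa using h
  have hinj2 : Function.Injective (fun k : ℕ => (k, b)) := fun x y h => by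
    simpa using h
  have hdisj : ∀ s t : Finset ℕ, s ⊆ Finset.Ioo a b →
      Disjoint (s.image (fun k => (a, k))) (t.image (fun k => (k, b))) := by
    intro s t hs
    rw [Finset.disjoint_left]
    rintro p hp hq
    obtain ⟨k, hk, rfl⟩ := Finset.mem_image.mp hp
    obtain ⟨k', _, hEq⟩ := Finset.mem_image.mp hq
    have h1 := (Finset.mem_Ioo.mp (hs hk)).2
    simp only [Prod.mk.injEq] at hEq
    omega
  have hnm : (a, b) ∉
      ((Finset.Ioo a b).filter (fun k => v k < v b)).image (fun k => (a, k))
        ∪ ((Finset.Ioo a b).filter (fun k => v a < v k)).image (fun k => (k, b)) := by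
    simp only [Finset.mem_union, Finset.mem_image, Finset.mem_filter, Finset.mem_Ioo,
      Prod.mk.injEq, not_or, not_exists]
    constructor <;> rintro k ⟨⟨⟨h1, h2⟩, _⟩, h3, h4⟩ <;> omega
  have hc1 : (I1.filter (fun p => σ p.2 < σ p.1)).card
      = ((Finset.Ioo a b).filter (fun k => v k < v a)).card
        + ((Finset.Ioo a b).filter (fun k => v b < v k)).card := by
    rw [hC1, Finset.card_union_of_disjoint (hdisj _ _ (Finset.filter_subset _ _)),
      Finset.card_image_of_injective _ hinj1, Finset.card_image_of_injective _ hinj2]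
  have hc2 : (I2.filter (fun p => σ p.2 < σ p.1)).card
      = ((Finset.Ioo a b).filter (fun k => v k < v b)).card
        + ((Finset.Ioo a b).filter (fun k => v a < v k)).card + 1 := by
    rw [hC2, Finset.card_insert_of_notMem hnm,
      Finset.card_union_of_disjoint (hdisj _ _ (Finset.filter_subset _ _)),
      Finset.card_image_of_injective _ hinj1, Finset.card_image_of_injective _ hinj2]
  -- splittings
  have hsplit1 : ((Finset.Ioo a b).filter (fun k => v k < v b)).card
      = ((Finset.Ioo a b).filter (fun k => v k < v a)).card
        + ((Finset.Ioo a b).filter (fun k => v a < v k ∧ v k < v b)).card := by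
    rw [← Finset.card_union_of_disjoint]
    · congr 1
      ext k
      simp only [Finset.mem_filter, Finset.mem_union, Finset.mem_Ioo]
      constructor
      · rintro ⟨⟨h1, h2⟩, h3⟩
        have hne : v k ≠ v a := fun h => absurd (v.injective h) (by omega)
        rcases hne.lt_or_gt with h | h
        · exact Or.inl ⟨⟨h1, h2⟩, h⟩
        · exact Or.inr ⟨⟨h1, h2⟩, h, h3⟩
      · rintro (⟨hk, h⟩ | ⟨hk, h⟩)
        · exact ⟨hk, h.trans hv⟩
        · exact ⟨hk, h.2⟩
    · rw [Finset.disjoint_left]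
      rintro k h1 h2
      simp only [Finset.mem_filter] at h1 h2
      omega
  have hsplit2 : ((Finset.Ioo a b).filter (fun k => v a < v k)).card
      = ((Finset.Ioo a b).filter (fun k => v b < v k)).card
        + ((Finset.Ioo a b).filter (fun k => v a < v k ∧ v k < v b)).card := by
    rw [← Finset.card_union_of_disjoint]
    · congr 1
      ext k
      simp only [Finset.mem_filter, Finset.mem_union, Finset.mem_Ioo]
      constructor
      · rintro ⟨⟨h1, h2⟩, h3⟩
        have hne : v k ≠ v b := fun h => absurd (v.injective h) (by omega)
        rcases hne.lt_or_gt with h | h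
        · exact Or.inr ⟨⟨h1, h2⟩, h3, h⟩
        · exact Or.inl ⟨⟨h1, h2⟩, h⟩
      · rintro (⟨hk, h⟩ | ⟨hk, h⟩)
        · exact ⟨hk, hv.trans h⟩
        · exact ⟨hk, h.1⟩
    · rw [Finset.disjoint_left]
      rintro k h1 h2
      simp only [Finset.mem_filter] at h1 h2
      omega
  have e1 := Finset.card_filter_add_card_filter_not
    (s := I1) (fun p : ℕ × ℕ => σ p.2 < σ p.1)
  have e2 := Finset.card_filter_add_card_filter_not
    (s := I2) (fun p : ℕ × ℕ => σ p.2 < σ p.1)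
  rw [einv1, einv2]
  omega

lemma invLen_mul_swap_lt (n a b : ℕ) (v : Equiv.Perm ℕ) (ha : 1 ≤ a) (hab : a < b)
    (hb : b ≤ n) (hv : v b < v a) :
    invLen n (v * Equiv.swap a b) + 1 ≤ invLen n v := by
  have h := invLen_mul_swap n a b (v * Equiv.swap a b) ha hab hb (by
    have h1 : (v * Equiv.swap a b) a = v b := by
      simp [Equiv.Perm.mul_apply]
    have h2 : (v * Equiv.swap a b) b = v a := by
      simp [Equiv.Perm.mul_apply]
    rw [h1, h2]; exact hv)
  rw [mul_assoc, Equiv.swap_mul_self, mul_one] at h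
  omega

lemma invLen_swap_succ_iff (n a b : ℕ) (v : Equiv.Perm ℕ) (ha : 1 ≤ a) (hab : a < b)
    (hb : b ≤ n) :
    invLen n (v * Equiv.swap a b) = invLen n v + 1 ↔
      (v a < v b ∧ ∀ k, a < k → k < b → ¬(v a < v k ∧ v k < v b)) := by
  constructor
  · intro h
    have hne : v a ≠ v b := fun hEq => absurd (v.injective hEq) (by omega)
    rcases hne.lt_or_gt with hlt | hlt
    · refine ⟨hlt, ?_⟩
      have hf := invLen_mul_swap n a b v ha hab hb hlt
      have hcard : ((Finset.Ioo a b).filter (fun k => v a < v k ∧ v k < v b)).card = 0 := by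
        omega
      intro k hk1 hk2 hbet
      have hmem : k ∈ (Finset.Ioo a b).filter (fun k => v a < v k ∧ v k < v b) :=
        Finset.mem_filter.mpr ⟨Finset.mem_Ioo.mpr ⟨hk1, hk2⟩, hbet⟩
      rw [Finset.card_eq_zero] at hcard
      rw [hcard] at hmem
      exact absurd hmem (Finset.notMem_empty k)
    · have := invLen_mul_swap_lt n a b v ha hab hb hlt
      omega
  · rintro ⟨hlt, hall⟩
    have hf := invLen_mul_swap n a b v ha hab hb hlt
    have hemp : (Finset.Ioo a b).filter (fun k => v a < v k ∧ v k < v b) = ∅ := by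
      rw [Finset.filter_eq_empty_iff]
      intro k hk
      exact hall k (Finset.mem_Ioo.mp hk).1 (Finset.mem_Ioo.mp hk).2
    rw [hemp] at hf
    simpa using hf

lemma swap_mul_swap_comm (a b c d : ℕ) (h1 : a ≠ c) (h2 : a ≠ d) (h3 : b ≠ c) (h4 : b ≠ d) :
    Equiv.swap a b * Equiv.swap c d = Equiv.swap c d * Equiv.swap a b := by
  ext x
  simp only [Equiv.Perm.mul_apply, Equiv.swap_apply_def]
  split_ifs <;> omega

theorem arrow_witness_interchange (n r m : ℕ) (u w : Equiv.Perm ℕ) (b c : ℕ → ℕ)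
    (hr : 1 ≤ r) (hrm : r ≤ m) (hmn : m < n)
    (hw : ArrowWitness n m (m - r + 1) u w b c)
    (i : ℕ) (hi1 : 1 ≤ i) (hi : i + 1 ≤ m - r + 1) (hc : c i ≠ c (i + 1)) :
    ArrowWitness n m (m - r + 1) u w
      (fun t => if t = i then b (i + 1) else if t = i + 1 then b i else b t)
      (fun t => if t = i then c (i + 1) else if t = i + 1 then c i else c t) := by
  obtain ⟨h1, h2, h3, h4⟩ := hw
  set l := m - r + 1 with hl
  set b' : ℕ → ℕ := fun t => if t = i then b (i + 1) else if t = i + 1 then b i else b t with hb'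
  set c' : ℕ → ℕ := fun t => if t = i then c (i + 1) else if t = i + 1 then c i else c t with hc'
  have hil : i ≤ l := by omega
  have hran1 := h1 i hi1 hil
  have hran2 := h1 (i + 1) (by omega) hi
  have hbb : b i ≠ b (i + 1) := h4 i (i + 1) hi1 (by omega) hi
  have h4' : ∀ s t, 1 ≤ s → s ≤ l → 1 ≤ t → t ≤ l → s ≠ t → b s ≠ b t := by
    intro s t hs hsl ht htl hne
    rcases lt_or_gt_of_ne hne with h | h
    · exact h4 s t hs h htl
    · exact (h4 t s ht h hsl).symm
  -- the two swaps commute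
  have hcomm : Equiv.swap (b i) (c i) * Equiv.swap (b (i + 1)) (c (i + 1))
      = Equiv.swap (b (i + 1)) (c (i + 1)) * Equiv.swap (b i) (c i) :=
    swap_mul_swap_comm _ _ _ _ hbb (by omega) (by omega) hc
  -- partial products below i agree
  have hPlt : ∀ j, j < i → partialProd u b' c' j = partialProd u b c j := by
    intro j hj
    induction j with
    | zero => rfl
    | succ k ih =>
      show partialProd u b' c' k * Equiv.swap (b' (k + 1)) (c' (k + 1))
          = partialProd u b c k * Equiv.swap (b (k + 1)) (c (k + 1))
      rw [ih (by omega)]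
      have e1 : b' (k + 1) = b (k + 1) := by
        rw [hb']; simp only []
        rw [if_neg (by omega), if_neg (by omega)]
      have e2 : c' (k + 1) = c (k + 1) := by
        rw [hc']; simp only []
        rw [if_neg (by omega), if_neg (by omega)]
      rw [e1, e2]
  obtain ⟨i0, rfl⟩ : ∃ i0, i = i0 + 1 := ⟨i - 1, by omega⟩
  set i := i0 + 1 with hidef
  -- values of b', c' at i, i+1
  have eb1 : b' i = b (i + 1) := if_pos rfl
  have ec1 : c' i = c (i + 1) := if_pos rfl
  have eb2 : b' (i + 1) = b i := by
    rw [hb']; simp only []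
    rw [if_neg (by omega)]; simp
  have ec2 : c' (i + 1) = c i := by
    rw [hc']; simp only []
    rw [if_neg (by omega)]; simp
  have hPi : partialProd u b' c' i = partialProd u b c i0 * Equiv.swap (b (i + 1)) (c (i + 1)) := by
    show partialProd u b' c' i0 * Equiv.swap (b' (i0 + 1)) (c' (i0 + 1)) = _
    rw [hPlt i0 (by omega), eb1, ec1]
  have hPsucc : partialProd u b' c' (i + 1) = partialProd u b c (i + 1) := by
    show partialProd u b' c' i * Equiv.swap (b' (i + 1)) (c' (i + 1)) = _
    rw [hPi, eb2, ec2, mul_assoc, ← hcomm, ← mul_assoc]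
    rfl
  have hPge : ∀ j, i + 1 ≤ j → partialProd u b' c' j = partialProd u b c j := by
    intro j hj
    obtain ⟨d, rfl⟩ : ∃ d, j = (i + 1) + d := ⟨j - (i + 1), by omega⟩
    induction d with
    | zero => exact hPsucc
    | succ e ih =>
      show partialProd u b' c' (i + 1 + e) * Equiv.swap (b' (i + 1 + e + 1)) (c' (i + 1 + e + 1))
          = partialProd u b c (i + 1 + e) * Equiv.swap (b (i + 1 + e + 1)) (c (i + 1 + e + 1))
      rw [ih (by omega)]
      have e1 : b' (i + 1 + e + 1) = b (i + 1 + e + 1) := by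
        rw [hb']; simp only []
        rw [if_neg (by omega), if_neg (by omega)]
      have e2 : c' (i + 1 + e + 1) = c (i + 1 + e + 1) := by
        rw [hc']; simp only []
        rw [if_neg (by omega), if_neg (by omega)]
      rw [e1, e2]
  refine ⟨?_, ?_, ?_, ?_⟩
  · -- condition (1)
    intro t ht1 htl
    by_cases hti : t = i
    · subst hti
      rw [eb1, ec1]
      exact h1 (i + 1) (by omega) hi
    · by_cases hti' : t = i + 1
      · subst hti'
        rw [eb2, ec2]
        exact h1 i hi1 hil
      · have e1 : b' t = b t := by
          rw [hb']; simp only []; rw [if_neg hti, if_neg hti']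
        have e2 : c' t = c t := by
          rw [hc']; simp only []; rw [if_neg hti, if_neg hti']
        rw [e1, e2]
        exact h1 t ht1 htl
  · -- condition (2)
    rw [h2, hPge l hi]
  · -- condition (3)
    intro j hj1 hjl
    rcases lt_trichotomy j i with hj | hj | hj
    · rw [hPlt j hj]
      exact h3 j hj1 (by omega)
    · -- the main case j = i
      subst hj
      rw [hPi]
      -- set up
      set v := partialProd u b c i0 with hv
      have hvlen : invLen n v = invLen n u + i0 := by
        rcases Nat.eq_zero_or_pos i0 with h0 | h0
        · subst h0; rw [hv]; rfl
        · exact h3 i0 h0 (by omega)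
      have hvs : invLen n (v * Equiv.swap (b i) (c i)) = invLen n u + i := h3 i hi1 hil
      have hvst : invLen n (v * Equiv.swap (b i) (c i) * Equiv.swap (b (i + 1)) (c (i + 1)))
          = invLen n u + (i + 1) := h3 (i + 1) (by omega) hi
      have hA := (invLen_swap_succ_iff n (b i) (c i) v hran1.1 (by omega) (by omega)).mp
        (by omega)
      have hB := (invLen_swap_succ_iff n (b (i + 1)) (c (i + 1)) (v * Equiv.swap (b i) (c i))
        hran2.1 (by omega) (by omega)).mp (by omega)
      -- unfold the values of v * swap (b i) (c i)
      set s := Equiv.swap (b i) (c i) with hs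
      have hsp : s (b (i + 1)) = b (i + 1) :=
        Equiv.swap_apply_of_ne_of_ne hbb.symm (by omega)
      have hsq : s (c (i + 1)) = c (i + 1) :=
        Equiv.swap_apply_of_ne_of_ne (by omega) (Ne.symm hc)
      have hsa : s (b i) = c i := Equiv.swap_apply_left _ _
      have hsd : s (c i) = b i := Equiv.swap_apply_right _ _
      have hvsp : (v * s) (b (i + 1)) = v (b (i + 1)) := by
        show v (s (b (i + 1))) = _
        rw [hsp]
      have hvsq : (v * s) (c (i + 1)) = v (c (i + 1)) := by
        show v (s (c (i + 1))) = _
        rw [hsq]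
      rw [hvsp, hvsq] at hB
      have hgoal : invLen n (v * Equiv.swap (b (i + 1)) (c (i + 1))) = invLen n v + 1 := by
        apply (invLen_swap_succ_iff n (b (i + 1)) (c (i + 1)) v hran2.1 (by omega)
          (by omega)).mpr
        refine ⟨hB.1, ?_⟩
        rintro k hk1 hk2 ⟨hbet1, hbet2⟩
        by_cases hka : k = b i
        · subst hka
          rcases lt_or_gt_of_ne hc with hdq | hdq
          · have hthis := hB.2 (c i) (by omega) hdq
            have hvsd : (v * s) (c i) = v (b i) := by
              show v (s (c i)) = _; rw [hsd]
            rw [hvsd] at hthis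
            exact hthis ⟨hbet1, hbet2⟩
          · have h5 := hA.2 (c (i + 1)) (by omega) hdq
            have hne : v (c i) ≠ v (c (i + 1)) := fun hEq => absurd (v.injective hEq) hc
            have h6 : v (c i) < v (c (i + 1)) := by
              rcases hne.lt_or_gt with h | h
              · exact h
              · exact absurd ⟨hbet2, h⟩ h5
            have hthis := hB.2 (b i) hk1 hk2
            have hvsa : (v * s) (b i) = v (c i) := by
              show v (s (b i)) = _; rw [hsa]
            rw [hvsa] at hthis
            exact hthis ⟨hbet1.trans hA.1, h6⟩
        · by_cases hkd : k = c i
          · subst hkd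
            rcases lt_or_gt_of_ne hbb with hap | hap
            · have h5 := hA.2 (b (i + 1)) hap (by omega)
              have hne : v (b (i + 1)) ≠ v (b i) := fun hEq => absurd (v.injective hEq) hbb.symm
              have h6 : v (b (i + 1)) < v (b i) := by
                rcases hne.lt_or_gt with h | h
                · exact h
                · exact absurd ⟨h, hbet1⟩ h5
              have hthis := hB.2 (c i) (by omega) hk2
              have hvsd : (v * s) (c i) = v (b i) := by
                show v (s (c i)) = _; rw [hsd]
              rw [hvsd] at hthis
              exact hthis ⟨h6, hA.1.trans hbet2⟩
            · have hthis := hB.2 (b i) hap (by omega)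
              have hvsa : (v * s) (b i) = v (c i) := by
                show v (s (b i)) = _; rw [hsa]
              rw [hvsa] at hthis
              exact hthis ⟨hbet1, hbet2⟩
          · have hthis := hB.2 k hk1 hk2
            have hvsk : (v * s) k = v k := by
              show v (s k) = _
              rw [Equiv.swap_apply_of_ne_of_ne hka hkd]
            rw [hvsk] at hthis
            exact hthis ⟨hbet1, hbet2⟩
      omega
    · rw [hPge j hj]
      exact h3 j hj1 hjl
  · -- condition (4)
    intro j1 j2 hj1 hlt hj2
    show b' j1 ≠ b' j2
    rw [hb']
    simp only []
    split_ifs <;>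
      exact h4' _ _ (by omega) (by omega) (by omega) (by omega) (by omega)
end

section
/- Let α = s_r s_{r+1} ⋯ s_m ∈ S_n and suppose u →_α w. Suppose for some l > m one has u(i) < u(l) for all m < i < l. Then for all j ≤ m with u(j) < u(l), one has w(j) ≤ u(l). -/
def PP (n : ℕ) : Finset (ℕ × ℕ) :=
  ((Finset.Icc 1 n) ×ˢ (Finset.Icc 1 n)).filter (fun p => p.1 < p.2)

lemma mem_PP {n : ℕ} {p : ℕ × ℕ} :
    p ∈ PP n ↔ (1 ≤ p.1 ∧ p.1 ≤ n) ∧ (1 ≤ p.2 ∧ p.2 ≤ n) ∧ p.1 < p.2 := by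
  simp [PP, Finset.mem_filter, Finset.mem_product, Finset.mem_Icc, and_assoc]

lemma invLen_eq (n : ℕ) (u : Equiv.Perm ℕ) :
    invLen n u = ((PP n).filter (fun p => u p.2 < u p.1)).card := by
  rw [invLen, PP, Finset.filter_filter]

lemma swap_mem_Icc {n b c x : ℕ} (hb : 1 ≤ b) (hbc : b < c) (hcn : c ≤ n)
    (hx1 : 1 ≤ x) (hxn : x ≤ n) : 1 ≤ Equiv.swap b c x ∧ Equiv.swap b c x ≤ n := by
  rcases eq_or_ne x b with rfl | hxb
  · simp [Equiv.swap_apply_left]; omega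
  rcases eq_or_ne x c with rfl | hxc
  · simp [Equiv.swap_apply_right]; omega
  · rw [Equiv.swap_apply_of_ne_of_ne hxb hxc]; omega

lemma mul_swap_invLen (n b c : ℕ) (v : Equiv.Perm ℕ) (hb : 1 ≤ b) (hbc : b < c) (hcn : c ≤ n) :
    invLen n (v * Equiv.swap b c)
      + 2 * (((PP n).filter (fun p => (Equiv.swap b c) p.2 < (Equiv.swap b c) p.1
               ∧ v p.2 < v p.1)).card)
    = invLen n v
      + ((PP n).filter (fun p => (Equiv.swap b c) p.2 < (Equiv.swap b c) p.1)).card := by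
  set t := Equiv.swap b c with ht
  have htt : ∀ x, t (t x) = x := fun x => Equiv.swap_apply_self _ _ _
  have htne : ∀ {x y : ℕ}, x ≠ y → t x ≠ t y := fun h => fun hc => h (t.injective hc)
  have htIcc : ∀ {x : ℕ}, 1 ≤ x → x ≤ n → 1 ≤ t x ∧ t x ≤ n := fun hx1 hxn =>
    swap_mem_Icc hb hbc hcn hx1 hxn
  -- A1 = B1
  have hA1 : ((PP n).filter (fun p => t p.1 < t p.2 ∧ v (t p.2) < v (t p.1))).card
      = ((PP n).filter (fun p => t p.1 < t p.2 ∧ v p.2 < v p.1)).card := by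
    apply Finset.card_nbij' (fun p => (t p.1, t p.2)) (fun p => (t p.1, t p.2))
    · rintro ⟨x, y⟩ hxy
      change (x, y) ∈ (PP n).filter (fun p => t p.1 < t p.2 ∧ v (t p.2) < v (t p.1)) at hxy
      simp only [Finset.mem_coe, Finset.mem_filter, mem_PP] at hxy ⊢
      obtain ⟨⟨h1, h2, _⟩, h4, h5⟩ := hxy
      exact ⟨⟨htIcc h1.1 h1.2, htIcc h2.1 h2.2, h4⟩, by simpa [htt], by simpa⟩
    · rintro ⟨x, y⟩ hxy
      change (x, y) ∈ (PP n).filter (fun p => t p.1 < t p.2 ∧ v p.2 < v p.1) at hxy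
      simp only [Finset.mem_coe, Finset.mem_filter, mem_PP] at hxy ⊢
      obtain ⟨⟨h1, h2, h3⟩, h4, h5⟩ := hxy
      exact ⟨⟨htIcc h1.1 h1.2, htIcc h2.1 h2.2, h4⟩, by simpa [htt], by simpa [htt]⟩
    · rintro ⟨x, y⟩ _; simp [htt]
    · rintro ⟨x, y⟩ _; simp [htt]
  -- A2 = B2'
  have hA2 : ((PP n).filter (fun p => t p.2 < t p.1 ∧ v (t p.2) < v (t p.1))).card
      = ((PP n).filter (fun p => t p.2 < t p.1 ∧ ¬ (v p.2 < v p.1))).card := by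
    apply Finset.card_nbij' (fun p => (t p.2, t p.1)) (fun p => (t p.2, t p.1))
    · rintro ⟨x, y⟩ hxy
      change (x, y) ∈ (PP n).filter (fun p => t p.2 < t p.1 ∧ v (t p.2) < v (t p.1)) at hxy
      simp only [Finset.mem_coe, Finset.mem_filter, mem_PP] at hxy ⊢
      obtain ⟨⟨h1, h2, h3⟩, h4, h5⟩ := hxy
      refine ⟨⟨htIcc h2.1 h2.2, htIcc h1.1 h1.2, h4⟩, by simpa [htt], by simp; omega⟩
    · rintro ⟨x, y⟩ hxy
      change (x, y) ∈ (PP n).filter (fun p => t p.2 < t p.1 ∧ ¬ (v p.2 < v p.1)) at hxy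
      simp only [Finset.mem_coe, Finset.mem_filter, mem_PP] at hxy ⊢
      obtain ⟨⟨h1, h2, h3⟩, h4, h5⟩ := hxy
      have hvne : v x ≠ v y := fun hc => (by omega : x ≠ y) (v.injective hc)
      refine ⟨⟨htIcc h2.1 h2.2, htIcc h1.1 h1.2, h4⟩, by simpa [htt], by simp [htt]; omega⟩
    · rintro ⟨x, y⟩ _; simp [htt]
    · rintro ⟨x, y⟩ _; simp [htt]
  -- splitting
  have hsplit : ∀ (f : ℕ × ℕ → Prop) [DecidablePred f],
      ((PP n).filter f).card
      = ((PP n).filter (fun p => t p.1 < t p.2 ∧ f p)).card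
        + ((PP n).filter (fun p => t p.2 < t p.1 ∧ f p)).card := by
    intro f _
    have key := Finset.card_filter_add_card_filter_not
      (s := (PP n).filter f) (p := fun p => t p.1 < t p.2)
    have e1 : ((PP n).filter f).filter (fun p => t p.1 < t p.2)
        = (PP n).filter (fun p => t p.1 < t p.2 ∧ f p) := by
      rw [Finset.filter_filter]
      exact Finset.filter_congr (fun x _ => by tauto)
    have e2 : ((PP n).filter f).filter (fun p => ¬ t p.1 < t p.2)
        = (PP n).filter (fun p => t p.2 < t p.1 ∧ f p) := by
      rw [Finset.filter_filter]
      apply Finset.filter_congr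
      rintro ⟨x, y⟩ hxy
      simp only [mem_PP] at hxy
      have : t x ≠ t y := htne (by omega)
      dsimp only
      constructor
      · rintro ⟨hf, hn⟩; exact ⟨by omega, hf⟩
      · rintro ⟨hn, hf⟩; exact ⟨hf, by omega⟩
    rw [e1, e2] at key
    omega
  rw [invLen_eq, invLen_eq]
  simp only [Equiv.Perm.mul_apply]
  change ((PP n).filter (fun p => v (t p.2) < v (t p.1))).card + _ = _
  rw [hsplit (fun p => v (t p.2) < v (t p.1)),
    hsplit (fun p => v p.2 < v p.1), hA1, hA2]
  have key2 := Finset.card_filter_add_card_filter_not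
    (s := (PP n).filter (fun p => t p.2 < t p.1)) (p := fun p => v p.2 < v p.1)
  have e3 : ((PP n).filter (fun p => t p.2 < t p.1)).filter (fun p => v p.2 < v p.1)
      = (PP n).filter (fun p => t p.2 < t p.1 ∧ v p.2 < v p.1) := Finset.filter_filter _ _ _
  have e4 : ((PP n).filter (fun p => t p.2 < t p.1)).filter (fun p => ¬ v p.2 < v p.1)
      = (PP n).filter (fun p => t p.2 < t p.1 ∧ ¬ v p.2 < v p.1) := Finset.filter_filter _ _ _
  rw [e3, e4] at key2
  omega

lemma mem_Q {n b c : ℕ} (hb : 1 ≤ b) (hbc : b < c) (hcn : c ≤ n) {p : ℕ × ℕ} :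
    p ∈ (PP n).filter (fun p => Equiv.swap b c p.2 < Equiv.swap b c p.1)
    ↔ (p.1 = b ∧ b < p.2 ∧ p.2 ≤ c) ∨ (p.2 = c ∧ b < p.1 ∧ p.1 < c) := by
  obtain ⟨x, y⟩ := p
  simp only [Finset.mem_filter, mem_PP]
  constructor
  · rintro ⟨⟨hx, hy, hxy⟩, hlt⟩
    rcases eq_or_ne x b with rfl | hxb
    · rcases eq_or_ne y c with rfl | hyc
      · exact Or.inl ⟨rfl, hbc, le_refl _⟩
      · rw [Equiv.swap_apply_left, Equiv.swap_apply_of_ne_of_ne (by omega) hyc] at hlt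
        exact Or.inl ⟨rfl, by omega, by omega⟩
    · rcases eq_or_ne y c with rfl | hyc
      · rcases eq_or_ne x y with rfl | hxc
        · omega
        · rw [Equiv.swap_apply_right, Equiv.swap_apply_of_ne_of_ne hxb hxc] at hlt
          exact Or.inr ⟨rfl, by omega, by omega⟩
      · exfalso
        rcases eq_or_ne x c with rfl | hxc
        · rw [Equiv.swap_apply_right, Equiv.swap_apply_of_ne_of_ne (by omega) hyc] at hlt
          omega
        · rcases eq_or_ne y b with rfl | hyb
          · rw [Equiv.swap_apply_left, Equiv.swap_apply_of_ne_of_ne hxb hxc] at hlt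
            omega
          · rw [Equiv.swap_apply_of_ne_of_ne hyb hyc,
              Equiv.swap_apply_of_ne_of_ne hxb hxc] at hlt
            omega
  · rintro (⟨rfl, h1, h2⟩ | ⟨rfl, h1, h2⟩)
    · refine ⟨⟨⟨hb, by omega⟩, ⟨by omega, by omega⟩, h1⟩, ?_⟩
      rcases eq_or_ne y c with rfl | hyc
      · rw [Equiv.swap_apply_left, Equiv.swap_apply_right]; omega
      · rw [Equiv.swap_apply_left, Equiv.swap_apply_of_ne_of_ne (by omega) hyc]; omega
    · refine ⟨⟨⟨by omega, by omega⟩, ⟨by omega, hcn⟩, h2⟩, ?_⟩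
      rw [Equiv.swap_apply_right, Equiv.swap_apply_of_ne_of_ne (by omega) (by omega)]
      omega

lemma Q_card {n b c : ℕ} (hb : 1 ≤ b) (hbc : b < c) (hcn : c ≤ n) :
    ((PP n).filter (fun p => Equiv.swap b c p.2 < Equiv.swap b c p.1)).card
      = (c - b) + (c - b - 1) := by
  have hQ : (PP n).filter (fun p => Equiv.swap b c p.2 < Equiv.swap b c p.1)
      = (Finset.Ioc b c).image (fun k => (b, k))
        ∪ (Finset.Ioo b c).image (fun k => (k, c)) := by
    ext p
    rw [mem_Q hb hbc hcn]
    simp only [Finset.mem_union, Finset.mem_image, Finset.mem_Ioc, Finset.mem_Ioo]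
    constructor
    · rintro (⟨h0, h1, h2⟩ | ⟨h0, h1, h2⟩)
      · exact Or.inl ⟨p.2, ⟨h1, h2⟩, by rw [← h0]⟩
      · exact Or.inr ⟨p.1, ⟨h1, h2⟩, by rw [← h0]⟩
    · rintro (⟨k, hk, rfl⟩ | ⟨k, hk, rfl⟩)
      · exact Or.inl ⟨rfl, hk.1, hk.2⟩
      · exact Or.inr ⟨rfl, hk.1, hk.2⟩
  rw [hQ, Finset.card_union_of_disjoint, Finset.card_image_of_injective,
    Finset.card_image_of_injective, Nat.card_Ioc, Nat.card_Ioo]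
  · intro a b h; simpa using h
  · intro a b h; simpa using h
  · rw [Finset.disjoint_left]
    rintro p hp1 hp2
    simp only [Finset.mem_image, Finset.mem_Ioc, Finset.mem_Ioo] at hp1 hp2
    obtain ⟨k1, hk1, rfl⟩ := hp1
    obtain ⟨k2, hk2, h⟩ := hp2
    have := congrArg Prod.fst h
    simp at this
    omega

lemma step_lemma {n b c : ℕ} (v : Equiv.Perm ℕ) (hb : 1 ≤ b) (hbc : b < c) (hcn : c ≤ n)
    (hlen : invLen n (v * Equiv.swap b c) = invLen n v + 1) :
    v b < v c ∧ ∀ k, b < k → k < c → ¬ (v b < v k ∧ v k < v c) := by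
  have hkey := mul_swap_invLen n b c v hb hbc hcn
  rw [hlen, Q_card hb hbc hcn] at hkey
  -- hkey : invLen n v + 1 + 2 * B2 = invLen n v + ((c-b) + (c-b-1))
  set B2 := (PP n).filter (fun p => Equiv.swap b c p.2 < Equiv.swap b c p.1
      ∧ v p.2 < v p.1) with hB2
  have hmemB2 : ∀ p : ℕ × ℕ, p ∈ B2 ↔
      (((p.1 = b ∧ b < p.2 ∧ p.2 ≤ c) ∨ (p.2 = c ∧ b < p.1 ∧ p.1 < c)) ∧ v p.2 < v p.1) := by
    intro p
    rw [hB2, ← Finset.filter_filter, Finset.mem_filter, mem_Q hb hbc hcn]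
  have hvbc : v b < v c := by
    by_contra hcon
    push_neg at hcon
    have hne : v c ≠ v b := fun h => (by omega : c ≠ b) (v.injective h)
    have hcb : v c < v b := by omega
    -- injection from Ioc b c into B2
    have hinj : (Finset.Ioc b c).card ≤ B2.card := by
      apply Finset.card_le_card_of_injOn
        (fun k => if k = c then (b, c) else if v k < v b then (b, k) else (k, c))
      · intro k hk
        simp only [Finset.mem_coe, Finset.mem_Ioc] at hk
        rw [Finset.mem_coe, hmemB2]
        beta_reduce
        split_ifs with h1 h2
        · subst h1; exact ⟨Or.inl ⟨rfl, hbc, le_refl _⟩, hcb⟩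
        · exact ⟨Or.inl ⟨rfl, hk.1, hk.2⟩, h2⟩
        · have : v k ≠ v b := fun h => (by omega : k ≠ b) (v.injective h)
          exact ⟨Or.inr ⟨rfl, hk.1, by omega⟩, show v c < v k by omega⟩
      · intro k1 hk1 k2 hk2 heq
        simp only [Finset.coe_sort_coe, Finset.mem_coe, Finset.mem_Ioc] at hk1 hk2
        have heq' : (if k1 = c then ((b, c) : ℕ × ℕ) else if v k1 < v b then (b, k1) else (k1, c))
            = (if k2 = c then ((b, c) : ℕ × ℕ) else if v k2 < v b then (b, k2) else (k2, c)) := heq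
        clear heq
        split_ifs at heq' with h1 h2 h3 h3 h4 h5 <;>
          simp only [Prod.mk.injEq] at heq' <;> omega
    have hQval : (c - b) + (c - b - 1) < 2 * B2.card + 1 := by
      rw [Nat.card_Ioc] at hinj
      omega
    omega
  refine ⟨hvbc, ?_⟩
  rintro k hbk hkc ⟨hk1, hk2⟩
  -- injection from B2 into (Ioo b c).erase k
  have hinj : B2.card ≤ ((Finset.Ioo b c).erase k).card := by
    apply Finset.card_le_card_of_injOn (fun p => if p.1 = b then p.2 else p.1)
    · intro p hp
      rw [Finset.mem_coe, hmemB2] at hp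
      beta_reduce
      obtain ⟨h1 | h2, hv⟩ := hp
      · obtain ⟨hpb, h1, h2⟩ := h1
        rw [if_pos hpb]
        rw [hpb] at hv
        have hne : p.2 ≠ c := fun h => by rw [h] at hv; omega
        have hnk : p.2 ≠ k := fun h => by rw [h] at hv; omega
        exact Finset.mem_erase.mpr ⟨hnk, Finset.mem_Ioo.mpr ⟨h1, by omega⟩⟩
      · obtain ⟨hpc, h1, h2⟩ := h2
        rw [hpc] at hv
        have hpb : p.1 ≠ b := by omega
        rw [if_neg hpb]
        have hnk : p.1 ≠ k := fun h => by rw [h] at hv; omega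
        exact Finset.mem_erase.mpr ⟨hnk, Finset.mem_Ioo.mpr ⟨h1, h2⟩⟩
    · intro p1 hp1 p2 hp2 heq
      simp only [Finset.coe_sort_coe, Finset.mem_coe] at hp1 hp2
      rw [hmemB2] at hp1 hp2
      have heq' : (if p1.1 = b then p1.2 else p1.1) = (if p2.1 = b then p2.2 else p2.1) := heq
      clear heq
      obtain ⟨hq1, hv1⟩ := hp1
      obtain ⟨hq2, hv2⟩ := hp2
      have hext : p1.1 = p2.1 ∧ p1.2 = p2.2 → p1 = p2 := fun ⟨h1, h2⟩ => Prod.ext h1 h2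
      rcases hq1 with ⟨ha1, hb1, hc1⟩ | ⟨ha1, hb1, hc1⟩ <;>
        rcases hq2 with ⟨ha2, hb2, hc2⟩ | ⟨ha2, hb2, hc2⟩
      · rw [if_pos ha1, if_pos ha2] at heq'; exact hext ⟨by omega, heq'⟩
      · rw [if_pos ha1, if_neg (by omega)] at heq'
        exfalso
        rw [ha1] at hv1; rw [ha2] at hv2; rw [heq'] at hv1
        omega
      · rw [if_neg (by omega), if_pos ha2] at heq'
        exfalso
        rw [ha1] at hv1; rw [ha2] at hv2; rw [← heq'] at hv2
        omega
      · rw [if_neg (by omega), if_neg (by omega)] at heq'; exact hext ⟨heq', by omega⟩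
  have hcard : ((Finset.Ioo b c).erase k).card = (c - b - 1) - 1 := by
    rw [Finset.card_erase_of_mem (Finset.mem_Ioo.mpr ⟨hbk, hkc⟩), Nat.card_Ioo]
  omega

theorem arrow_values_bound_below (n r m l : ℕ) (u w : Equiv.Perm ℕ)
    (hr : 1 ≤ r) (hrm : r ≤ m) (hmn : m < n)
    (harrow : PieriArrow n r m u w)
    (hl : m < l) (hln : l ≤ n)
    (hmax : ∀ i, m < i → i < l → u i < u l) :
    ∀ j, 1 ≤ j → j ≤ m → u j < u l → w j ≤ u l := by
  obtain ⟨b, c, hrange, hw, hlenH, hdist⟩ := harrow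
  set L := m - r + 1 with hL
  have hF2 : ∀ i, i < L →
      (partialProd u b c i) (b (i+1)) < (partialProd u b c i) (c (i+1)) ∧
      ∀ k, b (i+1) < k → k < c (i+1) →
        ¬ ((partialProd u b c i) (b (i+1)) < (partialProd u b c i) k ∧
           (partialProd u b c i) k < (partialProd u b c i) (c (i+1))) := by
    intro i hi
    obtain ⟨hb1, hbm, hmc, hcn⟩ := hrange (i+1) (by omega) (by omega)
    apply step_lemma _ hb1 (by omega) hcn
    have key : invLen n (partialProd u b c (i+1))
        = invLen n (partialProd u b c i) + 1 := by
      rcases Nat.eq_zero_or_pos i with rfl | hi0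
      · exact hlenH 1 le_rfl (by omega)
      · rw [hlenH (i+1) (by omega) (by omega), hlenH i (by omega) (by omega)]
        omega
    exact key
  have M1 : ∀ i, i ≤ L → ∀ p, m < p → partialProd u b c i p ≤ u p := by
    intro i
    induction i with
    | zero => intro _ p _; exact le_rfl
    | succ i ih =>
      intro hiL p hp
      have hF := hF2 i (by omega)
      obtain ⟨hb1, hbm, hmc, hcn⟩ := hrange (i+1) (by omega) (by omega)
      show (partialProd u b c i) (Equiv.swap (b (i+1)) (c (i+1)) p) ≤ u p
      rcases eq_or_ne p (c (i+1)) with rfl | hpc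
      · rw [Equiv.swap_apply_right]
        exact le_of_lt (lt_of_lt_of_le hF.1 (ih (by omega) _ hp))
      · have hpb : p ≠ b (i+1) := by omega
        rw [Equiv.swap_apply_of_ne_of_ne hpb hpc]
        exact ih (by omega) p hp
  intro j hj1 hjm hujl
  have M2 : ∀ i, i ≤ L → (∀ i', 1 ≤ i' → i' ≤ i → b i' ≠ j) →
      partialProd u b c i j = u j := by
    intro i
    induction i with
    | zero => intro _ _; rfl
    | succ i ih =>
      intro hiL hb'
      obtain ⟨hb1, hbm, hmc, hcn⟩ := hrange (i+1) (by omega) (by omega)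
      show partialProd u b c i (Equiv.swap (b (i+1)) (c (i+1)) j) = u j
      rw [Equiv.swap_apply_of_ne_of_ne (Ne.symm (hb' (i+1) (by omega) le_rfl)) (by omega)]
      exact ih (by omega) (fun i' h1 h2 => hb' i' h1 (by omega))
  by_cases hex : ∃ i₀, 1 ≤ i₀ ∧ i₀ ≤ L ∧ b i₀ = j
  case neg =>
    push_neg at hex
    rw [hw, M2 L le_rfl (fun i' h1 h2 => hex i' h1 h2)]
    exact le_of_lt hujl
  case pos =>
    obtain ⟨i₀, hi₀1, hi₀L, hbi₀⟩ := hex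
    have hbne : ∀ i', 1 ≤ i' → i' ≤ L → i' ≠ i₀ → b i' ≠ j := by
      intro i' h1 h2 h3
      rw [← hbi₀]
      rcases lt_or_gt_of_ne h3 with h | h
      · exact hdist i' i₀ h1 h hi₀L
      · exact (hdist i₀ i' hi₀1 h h2).symm
    have hvj : ∀ i, i ≤ i₀ - 1 → partialProd u b c i j = u j := fun i hi =>
      M2 i (by omega) (fun i' h1 h2 => hbne i' h1 (by omega) (by omega))
    have hinv : ∀ i, i ≤ i₀ - 1 → ∃ q, j < q ∧ q ≤ l ∧
        u j < partialProd u b c i q ∧ partialProd u b c i q ≤ u l ∧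
        (q ≤ m → ∀ i', i < i' → i' ≤ L → b i' ≠ q) := by
      intro i
      induction i with
      | zero =>
        intro _
        exact ⟨l, by omega, le_rfl, hujl, le_rfl, fun h => absurd h (by omega)⟩
      | succ i ih =>
        intro hi1
        obtain ⟨q, hq1, hq2, hq3, hq4, hq5⟩ := ih (by omega)
        obtain ⟨hb1, hbm, hmc, hcn⟩ := hrange (i+1) (by omega) (by omega)
        have hF := hF2 i (by omega)
        have happ : ∀ x, partialProd u b c (i+1) x
            = partialProd u b c i (Equiv.swap (b (i+1)) (c (i+1)) x) := fun x => rfl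
        have hbj : b (i+1) ≠ j := hbne (i+1) (by omega) (by omega) (by omega)
        rcases eq_or_ne q (c (i+1)) with rfl | hqc
        · rcases lt_or_ge (u j) (partialProd u b c i (b (i+1))) with hB | hB
          · refine ⟨c (i+1), hq1, hq2, ?_, ?_, fun h => absurd h (by omega)⟩
            · rw [happ, Equiv.swap_apply_right]; exact hB
            · rw [happ, Equiv.swap_apply_right]
              have := hF.1
              omega
          · have hBj : partialProd u b c i (b (i+1)) < u j := by
              have hne : partialProd u b c i (b (i+1)) ≠ u j := by
                rw [← hvj i (by omega)]
                intro hcon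
                exact hbj ((partialProd u b c i).injective hcon)
              omega
            rcases lt_or_gt_of_ne hbj with hlt | hgt
            · exfalso
              apply hF.2 j hlt hq1
              constructor
              · rw [hvj i (by omega)]; exact hBj
              · rw [hvj i (by omega)]; exact hq3
            · refine ⟨b (i+1), hgt, by omega, ?_, ?_, ?_⟩
              · rw [happ, Equiv.swap_apply_left]; exact hq3
              · rw [happ, Equiv.swap_apply_left]; exact hq4
              · intro _ i' hii' hi'L
                exact (hdist (i+1) i' (by omega) hii' hi'L).symm
        · rcases eq_or_ne q (b (i+1)) with rfl | hqb
          · exact absurd rfl (hq5 hbm (i+1) (by omega) (by omega))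
          · refine ⟨q, hq1, hq2, ?_, ?_, ?_⟩
            · rw [happ, Equiv.swap_apply_of_ne_of_ne hqb hqc]; exact hq3
            · rw [happ, Equiv.swap_apply_of_ne_of_ne hqb hqc]; exact hq4
            · intro hqm i' hii' hi'L; exact hq5 hqm i' (by omega) hi'L
    obtain ⟨q, hq1, hq2, hq3, hq4, hq5⟩ := hinv (i₀ - 1) le_rfl
    obtain ⟨hb1, hbm, hmc, hcn⟩ := hrange i₀ hi₀1 hi₀L
    have hF := hF2 (i₀ - 1) (by omega)
    have he : i₀ - 1 + 1 = i₀ := by omega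
    rw [he] at hF
    have hvC : partialProd u b c (i₀ - 1) (c i₀) ≤ u l := by
      by_contra hcon
      push_neg at hcon
      rcases lt_trichotomy (c i₀) l with h | h | h
      · have h1 := M1 (i₀ - 1) (by omega) (c i₀) hmc
        have h2 := hmax (c i₀) hmc h
        omega
      · rw [h] at hcon
        have h1 := M1 (i₀ - 1) (by omega) l (by omega)
        omega
      · apply hF.2 q (by rw [hbi₀]; exact hq1) (by omega)
        constructor
        · rw [hbi₀, hvj (i₀ - 1) le_rfl]; exact hq3
        · omega
    have hwj : ∀ i, i₀ ≤ i → i ≤ L → partialProd u b c i j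
        = partialProd u b c (i₀ - 1) (c i₀) := by
      intro i
      induction i with
      | zero => intro h1 _; exact absurd h1 (by omega)
      | succ i ih =>
        intro h1 h2
        rcases Nat.lt_or_ge i₀ (i+1) with hlt | hge
        · have hstep : partialProd u b c (i+1) j = partialProd u b c i j := by
            obtain ⟨hb1', hbm', hmc', hcn'⟩ := hrange (i+1) (by omega) (by omega)
            show partialProd u b c i (Equiv.swap (b (i+1)) (c (i+1)) j) = _
            rw [Equiv.swap_apply_of_ne_of_ne
              (Ne.symm (hbne (i+1) (by omega) (by omega) (by omega))) (by omega)]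
          rw [hstep]
          exact ih (by omega) (by omega)
        · have hbj' : b (i+1) = j := by rw [show i + 1 = i₀ from by omega, hbi₀]
          show partialProd u b c i (Equiv.swap (b (i+1)) (c (i+1)) j) = _
          rw [← hbj', Equiv.swap_apply_left, show (i : ℕ) = i₀ - 1 from by omega, he]
    rw [hw, hwj L hi₀L le_rfl]
    exact hvC
end

section
/- Let {e_1,...,e_n} be a basis of a vector space E and let u, w ∈ S_n with u →_α w for α = s_r ⋯ s_m. Suppose x_1,...,x_n ∈ E satisfy: (i) if i ≤ m and u(i) = w(i) then x_i = e_{u(i)}; (ii) if i ≤ m and u(i) ≠ w(i) then x_i = λ_i e_{u(i)} + μ_i e_{w(i)} with λ_i, μ_i ≠ 0; (iii) if i > m then x_i = e_{u(i)} or x_i = e_{w(i)}. Then {x_1,...,x_n} is a basis of E. -/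
theorem basis_lemma (n r m : ℕ) (E : Type*) [AddCommGroup E] [Module ℂ E]
    (e : ℕ → E) (hbasis : ∃ bE : Module.Basis (Fin n) ℂ E, ∀ i : Fin n, bE i = e ((i : ℕ) + 1))
    (u w : Equiv.Perm ℕ)
    (hufix : ∀ i, ¬(1 ≤ i ∧ i ≤ n) → u i = i) (hwfix : ∀ i, ¬(1 ≤ i ∧ i ≤ n) → w i = i)
    (hr : 1 ≤ r) (hrm : r ≤ m) (hmn : m < n)
    (harrow : PieriArrow n r m u w)
    (x : ℕ → E) (lam mu : ℕ → ℂ)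
    (hx1 : ∀ i, 1 ≤ i → i ≤ m → u i = w i → x i = e (u i))
    (hx2 : ∀ i, 1 ≤ i → i ≤ m → u i ≠ w i →
      lam i ≠ 0 ∧ mu i ≠ 0 ∧ x i = lam i • e (u i) + mu i • e (w i))
    (hx3 : ∀ i, m < i → i ≤ n → x i = e (u i) ∨ x i = e (w i)) :
    ∃ bx : Module.Basis (Fin n) ℂ E, ∀ i : Fin n, bx i = x ((i : ℕ) + 1) := by
  classical
  obtain ⟨bE, hbE⟩ := hbasis
  obtain ⟨b, c, hbc, hw, -, hdist⟩ := harrow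
  set l : ℕ := m - r + 1 with hl
  set Q : ℕ → Equiv.Perm ℕ := partialProd 1 b c with hQ
  have hQsucc : ∀ i, Q (i + 1) = Q i * Equiv.swap (b (i + 1)) (c (i + 1)) := fun i => rfl
  have hQ0 : ∀ p, Q 0 p = p := fun p => rfl
  have hpp : ∀ i, partialProd u b c i = u * Q i := by
    intro i
    induction i with
    | zero => rfl
    | succ i ih =>
      show partialProd u b c i * _ = _
      rw [ih, hQsucc, mul_assoc]
  have hwapp : ∀ p, w p = u (Q l p) := by
    intro p
    rw [hw, hpp]
    rfl
  -- Q i fixes small values not among b 1 .. b i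
  have hfix_small : ∀ i, i ≤ l → ∀ p, p ≤ m → (∀ j, 1 ≤ j → j ≤ i → b j ≠ p) → Q i p = p := by
    intro i
    induction i with
    | zero => intro _ p _ _; exact hQ0 p
    | succ i ih =>
      intro hil p hpm hnb
      rw [hQsucc, Equiv.Perm.mul_apply]
      have hs : Equiv.swap (b (i + 1)) (c (i + 1)) p = p := by
        refine Equiv.swap_apply_of_ne_of_ne (fun h => hnb (i + 1) (by omega) (by omega) h.symm) ?_
        have := (hbc (i + 1) (by omega) hil).2.2.1
        omega
      rw [hs]
      exact ih (by omega) p hpm (fun j h1 h2 => hnb j h1 (by omega))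
  -- Q i fixes large values not among c 1 .. c i
  have hfix_large : ∀ i, i ≤ l → ∀ p, m < p → (∀ j, 1 ≤ j → j ≤ i → c j ≠ p) → Q i p = p := by
    intro i
    induction i with
    | zero => intro _ p _ _; exact hQ0 p
    | succ i ih =>
      intro hil p hpm hnc
      rw [hQsucc, Equiv.Perm.mul_apply]
      have hs : Equiv.swap (b (i + 1)) (c (i + 1)) p = p := by
        refine Equiv.swap_apply_of_ne_of_ne ?_ (fun h => hnc (i + 1) (by omega) (by omega) h.symm)
        have := (hbc (i + 1) (by omega) hil).2.1
        omega
      rw [hs]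
      exact ih (by omega) p hpm (fun j h1 h2 => hnc j h1 (by omega))
  -- behaviour of Q i on large values
  have hQc : ∀ i, i ≤ l → ∀ p, m < p →
      (Q i p = p ∧ ∀ j, 1 ≤ j → j ≤ i → c j ≠ p) ∨
      (∃ j, 1 ≤ j ∧ j ≤ i ∧ c j = p ∧ Q i p = b j ∧ ∀ j', j < j' → j' ≤ i → c j' ≠ p) := by
    intro i
    induction i with
    | zero => intro _ p _; left; exact ⟨hQ0 p, by omega⟩
    | succ i ih =>
      intro hil p hmp
      rw [hQsucc]
      by_cases hc : c (i + 1) = p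
      · have hs : (Q i * Equiv.swap (b (i + 1)) (c (i + 1))) p = Q i (b (i + 1)) := by
          rw [Equiv.Perm.mul_apply, ← hc, Equiv.swap_apply_right]
        rw [hs]
        right
        refine ⟨i + 1, by omega, le_refl _, hc, ?_, by intro j' h1 h2; omega⟩
        exact hfix_small i (by omega) (b (i + 1)) (hbc (i + 1) (by omega) hil).2.1
          (fun j h1 h2 => hdist j (i + 1) h1 (by omega) hil)
      · have hs : (Q i * Equiv.swap (b (i + 1)) (c (i + 1))) p = Q i p := by
          rw [Equiv.Perm.mul_apply]
          congr 1
          refine Equiv.swap_apply_of_ne_of_ne ?_ (Ne.symm hc)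
          have := (hbc (i + 1) (by omega) hil).2.1
          omega
        rw [hs]
        rcases ih (by omega) p hmp with ⟨h1, h2⟩ | ⟨j, hj1, hj2, hj3, hj4, hj5⟩
        · left
          refine ⟨h1, fun j hj1 hj2 => ?_⟩
          by_cases h : j = i + 1
          · rw [h]; exact hc
          · exact h2 j hj1 (by omega)
        · right
          refine ⟨j, hj1, by omega, hj3, hj4, fun j' h1 h2 => ?_⟩
          by_cases h : j' = i + 1
          · rw [h]; exact hc
          · exact hj5 j' h1 (by omega)
  -- Q is stable on b i after step i
  have hstable : ∀ i, 1 ≤ i → i ≤ l → Q l (b i) = Q i (b i) := by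
    intro i h1 h2
    have key : ∀ k, i ≤ k → k ≤ l → Q k (b i) = Q i (b i) := by
      intro k
      induction k with
      | zero => intro h0 _; omega
      | succ k ih =>
        intro hik hkl
        rcases Nat.eq_or_lt_of_le hik with h | h
        · rw [← h]
        · rw [hQsucc, Equiv.Perm.mul_apply]
          have hs : Equiv.swap (b (k + 1)) (c (k + 1)) (b i) = b i := by
            refine Equiv.swap_apply_of_ne_of_ne (hdist i (k + 1) h1 (by omega) hkl) ?_
            have := (hbc (k + 1) (by omega) hkl).2.2.1
            have := (hbc i h1 h2).2.1
            omega
          rw [hs]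
          exact ih (by omega) (by omega)
    exact key l h2 (le_refl l)
  have hQb : ∀ i, i + 1 ≤ l → Q l (b (i + 1)) = Q i (c (i + 1)) := by
    intro i h2
    rw [hstable (i + 1) (by omega) h2, hQsucc, Equiv.Perm.mul_apply, Equiv.swap_apply_left]
  -- b i is never fixed by Q l
  have hQbne : ∀ i, 1 ≤ i → i ≤ l → Q l (b i) ≠ b i := by
    intro i h1 h2
    obtain ⟨i', rfl⟩ : ∃ i', i = i' + 1 := ⟨i - 1, by omega⟩
    rw [hQb i' h2]
    rcases hQc i' (by omega) (c (i' + 1)) (hbc (i' + 1) h1 h2).2.2.1 with ⟨hfix, -⟩ |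
      ⟨j, hj1, hj2, hj3, hj4, -⟩
    · rw [hfix]
      have := (hbc (i' + 1) h1 h2).2.1
      have := (hbc (i' + 1) h1 h2).2.2.1
      omega
    · rw [hj4]
      exact hdist j (i' + 1) hj1 (by omega) h2
  have hne : ∀ i, 1 ≤ i → i ≤ l → u (b i) ≠ w (b i) := by
    intro i h1 h2 h
    exact hQbne i h1 h2 (u.injective (h.trans (hwapp (b i)))).symm
  -- the span of the x's
  set Sp : Submodule ℂ E := Submodule.span ℂ (Set.range fun i : Fin n => x ((i : ℕ) + 1))
    with hSp
  have hxSp : ∀ p, 1 ≤ p → p ≤ n → x p ∈ Sp := by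
    intro p h1 h2
    apply Submodule.subset_span
    exact ⟨⟨p - 1, by omega⟩, by show x (p - 1 + 1) = x p; congr 1; omega⟩
  -- forward and backward propagation at small positions
  have Pfwd : ∀ i, 1 ≤ i → i ≤ l → e (u (b i)) ∈ Sp → e (w (b i)) ∈ Sp := by
    intro i h1 h2 hmem
    have hbm := (hbc i h1 h2).2.1
    have hb1 := (hbc i h1 h2).1
    obtain ⟨hl0, hm0, hxe⟩ := hx2 (b i) hb1 hbm (hne i h1 h2)
    have he : e (w (b i)) = (mu (b i))⁻¹ • (x (b i) - lam (b i) • e (u (b i))) := by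
      rw [hxe, add_sub_cancel_left, smul_smul, inv_mul_cancel₀ hm0, one_smul]
    rw [he]
    exact Submodule.smul_mem _ _ (Submodule.sub_mem _ (hxSp _ hb1 (by omega))
      (Submodule.smul_mem _ _ hmem))
  have Pbwd : ∀ i, 1 ≤ i → i ≤ l → e (w (b i)) ∈ Sp → e (u (b i)) ∈ Sp := by
    intro i h1 h2 hmem
    have hbm := (hbc i h1 h2).2.1
    have hb1 := (hbc i h1 h2).1
    obtain ⟨hl0, hm0, hxe⟩ := hx2 (b i) hb1 hbm (hne i h1 h2)
    have he : e (u (b i)) = (lam (b i))⁻¹ • (x (b i) - mu (b i) • e (w (b i))) := by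
      rw [hxe, add_sub_cancel_right, smul_smul, inv_mul_cancel₀ hl0, one_smul]
    rw [he]
    exact Submodule.smul_mem _ _ (Submodule.sub_mem _ (hxSp _ hb1 (by omega))
      (Submodule.smul_mem _ _ hmem))
  -- propagation down the chain of a large value
  have claimB : ∀ i, 1 ≤ i → i ≤ l → e (u (c i)) ∈ Sp → e (u (b i)) ∈ Sp := by
    intro i
    induction i using Nat.strong_induction_on with
    | _ i ih =>
      intro h1 h2 hmem
      obtain ⟨i', rfl⟩ : ∃ i', i = i' + 1 := ⟨i - 1, by omega⟩
      have hQbi := hQb i' h2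
      rcases hQc i' (by omega) (c (i' + 1)) (hbc (i' + 1) h1 h2).2.2.1 with ⟨hfix, -⟩ |
        ⟨j, hj1, hj2, hj3, hj4, -⟩
      · apply Pbwd (i' + 1) h1 h2
        rw [hwapp, hQbi, hfix]
        exact hmem
      · apply Pbwd (i' + 1) h1 h2
        have hrw : e (w (b (i' + 1))) = e (u (b j)) := by rw [hwapp, hQbi, hj4]
        rw [hrw]
        exact ih j (by omega) hj1 (by omega) (by rw [hj3]; exact hmem)
  have claimA : ∀ i, 1 ≤ i → i ≤ l → e (u (b i)) ∈ Sp →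
      e (u (c i)) ∈ Sp ∧ ∀ j, 1 ≤ j → j ≤ i → c j = c i → e (u (b j)) ∈ Sp := by
    intro i
    induction i using Nat.strong_induction_on with
    | _ i ih =>
      intro h1 h2 hmem
      obtain ⟨i', rfl⟩ : ∃ i', i = i' + 1 := ⟨i - 1, by omega⟩
      have hw1 : e (w (b (i' + 1))) ∈ Sp := Pfwd (i' + 1) h1 h2 hmem
      have hQbi := hQb i' h2
      rcases hQc i' (by omega) (c (i' + 1)) (hbc (i' + 1) h1 h2).2.2.1 with ⟨hfix, hno⟩ |
        ⟨j, hj1, hj2, hj3, hj4, hj5⟩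
      · constructor
        · rw [hwapp, hQbi, hfix] at hw1
          exact hw1
        · intro j hj1 hj2 hj3
          rcases Nat.eq_or_lt_of_le hj2 with heq | hlt
          · subst heq; exact hmem
          · exact absurd hj3 (hno j hj1 (by omega))
      · have hbj : e (u (b j)) ∈ Sp := by
          rw [hwapp, hQbi, hj4] at hw1
          exact hw1
        obtain ⟨hcj, hall⟩ := ih j (by omega) hj1 (by omega) hbj
        constructor
        · rw [← hj3]; exact hcj
        · intro j2 h21 h22 h23
          rcases Nat.lt_or_ge j j2 with h | h
          · rcases Nat.eq_or_lt_of_le h22 with heq | hlt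
            · subst heq; exact hmem
            · exact absurd h23 (hj5 j2 h (by omega))
          · refine hall j2 h21 h ?_
            rw [h23, hj3]
  -- the main claim, position by position
  have main : ∀ i, 1 ≤ i → i ≤ l → e (u (b i)) ∈ Sp ∧ e (u (c i)) ∈ Sp := by
    intro i h1 h2
    have hmc := (hbc i h1 h2).2.2.1
    have hcn := (hbc i h1 h2).2.2.2
    rcases hQc l (le_refl l) (c i) hmc with ⟨-, hno⟩ | ⟨J, hJ1, hJ2, hJ3, hJ4, hJ5⟩
    · exact absurd rfl (hno i h1 h2)
    · have hiJ : i ≤ J := by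
        by_contra h
        exact hJ5 i (by omega) h2 rfl
      rcases hx3 (c i) hmc hcn with hxv | hxv
      · have hcSp : e (u (c i)) ∈ Sp := by
          rw [← hxv]
          exact hxSp (c i) (by omega) hcn
        exact ⟨claimB i h1 h2 hcSp, hcSp⟩
      · have hbJ : e (u (b J)) ∈ Sp := by
          have hx' : x (c i) = e (u (b J)) := by rw [hxv, hwapp, hJ4]
          rw [← hx']
          exact hxSp (c i) (by omega) hcn
        obtain ⟨hcJ, hall⟩ := claimA J hJ1 hJ2 hbJ
        refine ⟨hall i h1 hiJ hJ3.symm, ?_⟩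
        rw [← hJ3]
        exact hcJ
  -- all positions
  have hallpos : ∀ p, 1 ≤ p → p ≤ n → e (u p) ∈ Sp := by
    intro p h1 h2
    by_cases hb : ∃ i, 1 ≤ i ∧ i ≤ l ∧ b i = p
    · obtain ⟨i, h1', h2', rfl⟩ := hb
      exact (main i h1' h2').1
    · by_cases hc : ∃ i, 1 ≤ i ∧ i ≤ l ∧ c i = p
      · obtain ⟨i, h1', h2', rfl⟩ := hc
        exact (main i h1' h2').2
      · push_neg at hb hc
        have hfix : Q l p = p := by
          rcases le_or_gt p m with h | h
          · exact hfix_small l (le_refl l) p h (fun j hj1 hj2 => hb j hj1 hj2)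
          · exact hfix_large l (le_refl l) p h (fun j hj1 hj2 => hc j hj1 hj2)
        have hup : w p = u p := by rw [hwapp, hfix]
        rcases le_or_gt p m with h | h
        · rw [← hx1 p h1 h hup.symm]
          exact hxSp p h1 h2
        · rcases hx3 p h h2 with hxv | hxv
          · rw [← hxv]
            exact hxSp p h1 h2
          · have hx' : x p = e (u p) := by rw [hxv, hup]
            rw [← hx']
            exact hxSp p h1 h2
  -- all basis vectors are in the span
  have hek : ∀ q, 1 ≤ q → q ≤ n → e q ∈ Sp := by
    intro q h1 h2
    have hup : u (u.symm q) = q := u.apply_symm_apply q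
    have hrange : 1 ≤ u.symm q ∧ u.symm q ≤ n := by
      by_contra h
      have h3 := (hufix _ h).symm.trans hup
      omega
    have := hallpos (u.symm q) hrange.1 hrange.2
    rw [hup] at this
    exact this
  have hcard : Fintype.card (Fin n) = Module.finrank ℂ E := by
    haveI := Module.Finite.of_basis bE
    exact (Module.finrank_eq_card_basis bE).symm
  have hle : ⊤ ≤ Submodule.span ℂ (Set.range fun i : Fin n => x ((i : ℕ) + 1)) := by
    rw [← bE.span_eq]
    apply Submodule.span_le.mpr
    rintro v ⟨i, rfl⟩
    have : bE i = e ((i : ℕ) + 1) := hbE i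
    rw [this]
    exact hek ((i : ℕ) + 1) (by omega) (by have := i.isLt; omega)
  refine ⟨basisOfTopLeSpanOfCardEqFinrank _ hle hcard, ?_⟩
  intro i
  simp [coe_basisOfTopLeSpanOfCardEqFinrank]
end

section
/- With the hypotheses of the previous basis lemma (u →_α w and x_i as specified), the flag V_• defined by V_i = span(x_1, ..., x_i) does not depend on the choices made in condition (iii); that is, for each i > m with u(i) ≠ w(i), span(x_1,...,x_{i-1}, e_{u(i)}) = span(x_1,...,x_{i-1}, e_{w(i)}). -/
lemma span_swap {E : Type*} [AddCommGroup E] [Module ℂ E] (S : Set E) (a b : E) (α β : ℂ)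
    (hα : α ≠ 0) (hβ : β ≠ 0) (h : α • a + β • b ∈ Submodule.span ℂ S) :
    Submodule.span ℂ (S ∪ {a}) = Submodule.span ℂ (S ∪ {b}) := by
  have key : ∀ (γ δ : ℂ) (p q : E), γ ≠ 0 → γ • p + δ • q ∈ Submodule.span ℂ S →
      p ∈ Submodule.span ℂ (S ∪ {q}) := by
    intro γ δ p q hγ hmem
    have h1 : γ • p + δ • q ∈ Submodule.span ℂ (S ∪ {q}) :=
      Submodule.span_mono Set.subset_union_left hmem
    have h2 : q ∈ Submodule.span ℂ (S ∪ {q}) :=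
      Submodule.subset_span (Set.mem_union_right _ rfl)
    have h3 : γ • p ∈ Submodule.span ℂ (S ∪ {q}) := by
      have := sub_mem h1 (Submodule.smul_mem _ δ h2)
      simpa using this
    have h4 := Submodule.smul_mem _ γ⁻¹ h3
    rwa [smul_smul, inv_mul_cancel₀ hγ, one_smul] at h4
  have hab : a ∈ Submodule.span ℂ (S ∪ {b}) := key α β a b hα h
  have hba : b ∈ Submodule.span ℂ (S ∪ {a}) := by
    apply key β α b a hβ
    rwa [add_comm] at h
  apply le_antisymm <;> rw [Submodule.span_le] <;> rintro v (hv | rfl)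
  · exact Submodule.subset_span (Set.mem_union_left _ hv)
  · exact hab
  · exact Submodule.subset_span (Set.mem_union_left _ hv)
  · exact hba

lemma partialProd_apply_of_fixed (u : Equiv.Perm ℕ) (b c : ℕ → ℕ) (l p : ℕ)
    (h : ∀ j, 1 ≤ j → j ≤ l → p ≠ b j ∧ p ≠ c j) :
    partialProd u b c l p = u p := by
  induction l with
  | zero => rfl
  | succ l ih =>
    have hp := h (l+1) (by omega) le_rfl
    show partialProd u b c l (Equiv.swap (b (l+1)) (c (l+1)) p) = u p
    rw [Equiv.swap_apply_of_ne_of_ne hp.1 hp.2]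
    exact ih fun j h1 h2 => h j h1 (by omega)

lemma chain_exists (m : ℕ) : ∀ (l : ℕ) (u : Equiv.Perm ℕ) (b c : ℕ → ℕ),
    (∀ j, 1 ≤ j → j ≤ l → 1 ≤ b j ∧ b j ≤ m ∧ m < c j) →
    (∀ i j, 1 ≤ i → i < j → j ≤ l → b i ≠ b j) →
    ∀ i, m < i →
    partialProd u b c l i = u i ∨
    ∃ (s : ℕ) (k : ℕ → ℕ), 1 ≤ s ∧
      (∀ t, 1 ≤ t → t ≤ s → (1 ≤ k t ∧ k t ≤ m) ∧ (∃ j, 1 ≤ j ∧ j ≤ l ∧ k t = b j) ∧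
        u (k t) ≠ partialProd u b c l (k t)) ∧
      partialProd u b c l (k 1) = u i ∧
      (∀ t, 1 ≤ t → t < s → partialProd u b c l (k (t+1)) = u (k t)) ∧
      u (k s) = partialProd u b c l i := by
  intro l
  induction l with
  | zero => intro u b c _ _ i _; left; rfl
  | succ l ih =>
    intro u b c hbc hinj i hi
    set B := b (l+1) with hB
    set C := c (l+1) with hC
    obtain ⟨hB1, hBm, hmC⟩ := hbc (l+1) (by omega) le_rfl
    set w := partialProd u b c l with hw
    have hWev : ∀ p, partialProd u b c (l+1) p = w (Equiv.swap B C p) := fun p => rfl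
    have hbc' : ∀ j, 1 ≤ j → j ≤ l → 1 ≤ b j ∧ b j ≤ m ∧ m < c j :=
      fun j h1 h2 => hbc j h1 (by omega)
    have hinj' : ∀ i j, 1 ≤ i → i < j → j ≤ l → b i ≠ b j :=
      fun i j h1 h2 h3 => hinj i j h1 h2 (by omega)
    -- B untouched in first l steps
    have hwB : w B = u B := by
      apply partialProd_apply_of_fixed
      intro j h1 h2
      refine ⟨fun h => hinj j (l+1) h1 (by omega) le_rfl h.symm, ?_⟩
      have := (hbc' j h1 h2).2.2; omega
    -- transfer of w-values at chain positions
    have htrans : ∀ p, 1 ≤ p → p ≤ m → (∃ j, 1 ≤ j ∧ j ≤ l ∧ p = b j) →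
        partialProd u b c (l+1) p = w p := by
      intro p h1 h2 ⟨j, hj1, hj2, hj3⟩
      rw [hWev, Equiv.swap_apply_of_ne_of_ne]
      · rw [hj3]; exact hinj j (l+1) hj1 (by omega) le_rfl
      · omega
    by_cases hiC : i = C
    · -- i = C case
      have hWi : partialProd u b c (l+1) i = u B := by
        rw [hWev, hiC, Equiv.swap_apply_right, hwB]
      have hWB : partialProd u b c (l+1) B = w i := by
        rw [hWev, Equiv.swap_apply_left, hiC]
      rcases ih u b c hbc' hinj' i hi with hfix | ⟨s, k, hs, hk, hhead, hlink, hlast⟩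
      · right
        refine ⟨1, fun _ => B, le_rfl, ?_, ?_, ?_, ?_⟩
        · intro t _ _
          refine ⟨⟨hB1, hBm⟩, ⟨l+1, by omega, le_rfl, rfl⟩, ?_⟩
          show u B ≠ partialProd u b c (l+1) B
          rw [hWB, hfix]
          intro h
          have : B = i := u.injective h
          omega
        · show partialProd u b c (l+1) B = u i
          rw [hWB, hfix]
        · intro t h1 h2; omega
        · show u B = partialProd u b c (l+1) i
          rw [hWi]
      · right
        refine ⟨s+1, fun t => if t = s+1 then B else k t, by omega, ?_, ?_, ?_, ?_⟩
        · intro t ht1 ht2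
          by_cases hts : t = s+1
          · simp only [hts, if_pos rfl, if_true, eq_self_iff_true]
            refine ⟨⟨hB1, hBm⟩, ⟨l+1, by omega, le_rfl, rfl⟩, ?_⟩
            rw [hWB, ← hlast]
            intro h
            have hBk : B = k s := u.injective h
            obtain ⟨⟨_, _⟩, ⟨j, hj1, hj2, hj3⟩, _⟩ := hk s hs le_rfl
            exact hinj j (l+1) hj1 (by omega) le_rfl (by rw [← hj3, ← hBk])
          · have hts' : t ≤ s := by omega
            simp only [if_neg hts]
            obtain ⟨hb1, hb2, hb3⟩ := hk t ht1 hts'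
            refine ⟨hb1, ⟨hb2.choose, hb2.choose_spec.1, by omega, hb2.choose_spec.2.2⟩, ?_⟩
            rw [htrans (k t) hb1.1 hb1.2 hb2]
            exact hb3
        · have h1s : (1:ℕ) ≠ s+1 := by omega
          simp only [if_neg h1s]
          obtain ⟨hb1, hb2, _⟩ := hk 1 le_rfl hs
          rw [htrans (k 1) hb1.1 hb1.2 hb2]
          exact hhead
        · intro t ht1 ht2
          by_cases hts : t = s
          · subst hts
            simp only [if_pos rfl, if_neg (by omega : t ≠ t+1), if_true, eq_self_iff_true]
            rw [hWB, ← hlast]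
          · have ht2' : t + 1 ≤ s := by omega
            simp only [if_neg (by omega : t+1 ≠ s+1), if_neg (by omega : t ≠ s+1)]
            obtain ⟨hb1, hb2, _⟩ := hk (t+1) (by omega) ht2'
            rw [htrans (k (t+1)) hb1.1 hb1.2 hb2]
            exact hlink t ht1 (by omega)
        · simp only [if_pos rfl, if_true, eq_self_iff_true]
          rw [hWi]
    · -- i ≠ C case
      have hWi : partialProd u b c (l+1) i = w i := by
        rw [hWev, Equiv.swap_apply_of_ne_of_ne (by omega) hiC]
      rcases ih u b c hbc' hinj' i hi with hfix | ⟨s, k, hs, hk, hhead, hlink, hlast⟩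
      · left; rw [hWi, hfix]
      · right
        refine ⟨s, k, hs, ?_, ?_, ?_, ?_⟩
        · intro t ht1 ht2
          obtain ⟨hb1, hb2, hb3⟩ := hk t ht1 ht2
          refine ⟨hb1, ⟨hb2.choose, hb2.choose_spec.1, by omega, hb2.choose_spec.2.2⟩, ?_⟩
          rw [htrans (k t) hb1.1 hb1.2 hb2]; exact hb3
        · obtain ⟨hb1, hb2, _⟩ := hk 1 le_rfl hs
          rw [htrans (k 1) hb1.1 hb1.2 hb2]; exact hhead
        · intro t ht1 ht2
          obtain ⟨hb1, hb2, _⟩ := hk (t+1) (by omega) ht2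
          rw [htrans (k (t+1)) hb1.1 hb1.2 hb2]
          exact hlink t ht1 ht2
        · rw [hWi]; exact hlast

theorem basis_lemma_flag_independent (n r m : ℕ) (E : Type*) [AddCommGroup E] [Module ℂ E]
    (e : ℕ → E) (hbasis : ∃ bE : Module.Basis (Fin n) ℂ E, ∀ i : Fin n, bE i = e ((i : ℕ) + 1))
    (u w : Equiv.Perm ℕ)
    (hufix : ∀ i, ¬(1 ≤ i ∧ i ≤ n) → u i = i) (hwfix : ∀ i, ¬(1 ≤ i ∧ i ≤ n) → w i = i)
    (hr : 1 ≤ r) (hrm : r ≤ m) (hmn : m < n)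
    (harrow : PieriArrow n r m u w)
    (x : ℕ → E) (lam mu : ℕ → ℂ)
    (hx1 : ∀ i, 1 ≤ i → i ≤ m → u i = w i → x i = e (u i))
    (hx2 : ∀ i, 1 ≤ i → i ≤ m → u i ≠ w i →
      lam i ≠ 0 ∧ mu i ≠ 0 ∧ x i = lam i • e (u i) + mu i • e (w i))
    (hx3 : ∀ i, m < i → i ≤ n → x i = e (u i) ∨ x i = e (w i)) :
    ∀ i, m < i → i ≤ n → u i ≠ w i →
      Submodule.span ℂ (x '' Set.Ico 1 i ∪ {e (u i)}) =
      Submodule.span ℂ (x '' Set.Ico 1 i ∪ {e (w i)}) := by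
  intro i hmi hin hne
  obtain ⟨b, c, hbnds, hweq, _, hbinj⟩ := harrow
  set l := m - r + 1 with hl
  have hchain := chain_exists m l u b c
    (fun j h1 h2 => ⟨(hbnds j h1 h2).1, (hbnds j h1 h2).2.1, (hbnds j h1 h2).2.2.1⟩)
    hbinj i hmi
  rw [← hweq] at hchain
  rcases hchain with hfix | ⟨s, k, hs, hk, hhead, hlink, hlast⟩
  · exact absurd hfix.symm hne
  set S := x '' Set.Ico 1 i with hS
  have step : ∀ t, 1 ≤ t → t ≤ s → ∀ v : ℕ, w (k t) = v →
      Submodule.span ℂ (S ∪ {e v}) = Submodule.span ℂ (S ∪ {e (u (k t))}) := by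
    intro t ht1 ht2 v hv
    obtain ⟨⟨h1, h2⟩, _, hne'⟩ := hk t ht1 ht2
    obtain ⟨hlm, hmu, hxe⟩ := hx2 (k t) h1 h2 hne'
    subst hv
    refine (span_swap S (e (u (k t))) (e (w (k t))) (lam (k t)) (mu (k t)) hlm hmu ?_).symm
    rw [← hxe]
    exact Submodule.subset_span ⟨k t, ⟨h1, by omega⟩, rfl⟩
  have main : ∀ t, 1 ≤ t → t ≤ s →
      Submodule.span ℂ (S ∪ {e (u i)}) = Submodule.span ℂ (S ∪ {e (u (k t))}) := by
    intro t ht1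
    induction t, ht1 using Nat.le_induction with
    | base => intro hts; exact step 1 le_rfl hts (u i) hhead
    | succ t ht ihp =>
      intro hts
      exact (ihp (by omega)).trans
        (step (t+1) (by omega) hts (u (k t)) (hlink t ht (by omega)))
  have := main s hs le_rfl
  rw [← hlast]
  exact this
end

section
/- In the setting of the basis lemma, the flag V_• with V_i = span(x_1,...,x_i) belongs to the Schubert cell condition for u relative to the flag F_• with F_i = span(e_{n+1-i},...,e_n): that is, for all i and p, dim(V_i ∩ F_p) ≥ #{t ≤ i : u(t) > n - p}. -/
open Finset in
lemma invLen_mul_swap_lt_s9 (n : ℕ) (σ : Equiv.Perm ℕ) (a c : ℕ)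
    (ha : 1 ≤ a) (hcn : c ≤ n) (hac : a < c) (hval : σ c < σ a) :
    invLen n (σ * Equiv.swap a c) < invLen n σ := by
  classical
  set t := Equiv.swap a c with ht
  have hta : t a = c := Equiv.swap_apply_left a c
  have htc : t c = a := Equiv.swap_apply_right a c
  have htx : ∀ x, x ≠ a → x ≠ c → t x = x := fun x h1 h2 => Equiv.swap_apply_of_ne_of_ne h1 h2
  have htt : ∀ x, t (t x) = x := fun x => Equiv.swap_apply_self a c x
  set I : Finset (ℕ × ℕ) := ((Finset.Icc 1 n) ×ˢ (Finset.Icc 1 n)).filter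
      (fun p => p.1 < p.2 ∧ σ p.2 < σ p.1) with hI
  set I' : Finset (ℕ × ℕ) := ((Finset.Icc 1 n) ×ˢ (Finset.Icc 1 n)).filter
      (fun p => p.1 < p.2 ∧ (σ * t) p.2 < (σ * t) p.1) with hI'
  have hIdef : invLen n σ = I.card := rfl
  have hI'def : invLen n (σ * t) = I'.card := rfl
  set f : ℕ × ℕ → ℕ × ℕ := fun pq => if t pq.1 < t pq.2 then (t pq.1, t pq.2) else pq with hf
  -- structure of the non-lt case
  have hflip : ∀ p q : ℕ, (p, q) ∈ I' → ¬ (t p < t q) →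
      ((p = a ∧ a < q ∧ q < c) ∨ (q = c ∧ a < p ∧ p < c)) := by
    intro p q hmem hnlt
    rw [hI', mem_filter] at hmem
    simp only [mem_product, mem_Icc, Equiv.Perm.mul_apply] at hmem
    obtain ⟨⟨⟨hp1, hpn⟩, hq1, hqn⟩, hpq, hv⟩ := hmem
    by_cases hpa : p = a
    · by_cases hqc : q = c
      · exfalso; rw [hpa, hqc, hta, htc] at hv; omega
      · left
        refine ⟨hpa, by omega, ?_⟩
        rw [hpa, hta, htx q (by omega) hqc] at hnlt
        omega
    · by_cases hqc : q = c
      · right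
        refine ⟨hqc, ?_, by omega⟩
        rw [hqc, htc, htx p hpa (by omega)] at hnlt
        omega
      · exfalso
        by_cases hpc : p = c
        · rw [hpc, htc, htx q (by omega) hqc] at hnlt; omega
        · by_cases hqa : q = a
          · rw [hqa, hta, htx p hpa hpc] at hnlt; omega
          · rw [htx p hpa hpc, htx q hqa hqc] at hnlt; omega
  have hinlt : ∀ p q : ℕ, (p, q) ∈ I' → ¬ (t p < t q) → (p, q) ∈ I := by
    intro p q hmem hnlt
    have hstruct := hflip p q hmem hnlt
    rw [hI', mem_filter] at hmem
    simp only [mem_product, mem_Icc, Equiv.Perm.mul_apply] at hmem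
    obtain ⟨⟨⟨hp1, hpn⟩, hq1, hqn⟩, hpq, hv⟩ := hmem
    simp only [hI, mem_filter, mem_product, mem_Icc]
    refine ⟨⟨⟨hp1, hpn⟩, hq1, hqn⟩, hpq, ?_⟩
    rcases hstruct with ⟨hpa, hq2, hq3⟩ | ⟨hqc, hp2, hp3⟩
    · rw [hpa, hta, htx q (by omega) (by omega)] at hv
      rw [hpa]
      omega
    · rw [hqc, htc, htx p (by omega) (by omega)] at hv
      rw [hqc]
      omega
  have hmapsto : ∀ pq ∈ I', f pq ∈ I := by
    rintro ⟨p, q⟩ hmem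
    by_cases hlt : t p < t q
    · have hmem' := hmem
      rw [hI', mem_filter] at hmem'
      simp only [mem_product, mem_Icc, Equiv.Perm.mul_apply] at hmem'
      obtain ⟨⟨⟨hp1, hpn⟩, hq1, hqn⟩, hpq, hv⟩ := hmem'
      have htmem : ∀ z, 1 ≤ z → z ≤ n → 1 ≤ t z ∧ t z ≤ n := by
        intro z h1 h2
        by_cases hza : z = a
        · rw [hza, hta]; omega
        · by_cases hzc : z = c
          · rw [hzc, htc]; omega
          · rw [htx z hza hzc]; omega
      have h1 := htmem p hp1 hpn
      have h2 := htmem q hq1 hqn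
      have : f (p, q) = (t p, t q) := by simp only [hf, if_pos hlt]
      rw [this]
      simp only [hI, mem_filter, mem_product, mem_Icc]
      exact ⟨⟨⟨h1.1, h1.2⟩, h2.1, h2.2⟩, hlt, hv⟩
    · have : f (p, q) = (p, q) := by simp only [hf]; rw [if_neg hlt]
      rw [this]
      exact hinlt p q hmem hlt
  have hbnd : ∀ p q : ℕ, (p, q) ∈ I' → p < q := by
    intro p q hmem
    simp only [hI', mem_filter] at hmem
    exact hmem.2.1
  have hfeval : ∀ p q : ℕ, f (p, q) = if t p < t q then (t p, t q) else (p, q) := by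
    intro p q; simp only [hf]
  have hinj : Set.InjOn f ↑I' := by
    rintro ⟨p, q⟩ hx ⟨p', q'⟩ hy hfe
    have hx' : (p, q) ∈ I' := hx
    have hy' : (p', q') ∈ I' := hy
    rw [hfeval, hfeval] at hfe
    by_cases h1 : t p < t q <;> by_cases h2 : t p' < t q'
    · rw [if_pos h1, if_pos h2] at hfe
      obtain ⟨hi1, hi2⟩ := Prod.ext_iff.mp hfe
      dsimp only at hi1 hi2
      exact Prod.ext (t.injective hi1) (t.injective hi2)
    · exfalso
      rw [if_pos h1, if_neg h2] at hfe
      obtain ⟨hi1, hi2⟩ := Prod.ext_iff.mp hfe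
      dsimp only at hi1 hi2
      have hpq : p < q := hbnd p q hx'
      rcases hflip p' q' hy' h2 with ⟨hpa, hq2, hq3⟩ | ⟨hqc, hp2, hp3⟩
      · have hpc : p = c := by
          have h := congrArg t hi1; rw [htt, hpa, hta] at h; exact h
        have hq : t q = q := htx q (by omega) (by omega)
        rw [hq] at hi2
        omega
      · have hqa : q = a := by
          have h := congrArg t hi2; rw [htt, hqc, htc] at h; exact h
        have hp : t p = p := htx p (by omega) (by omega)
        rw [hp] at hi1
        omega
    · exfalso
      rw [if_neg h1, if_pos h2] at hfe
      obtain ⟨hi1, hi2⟩ := Prod.ext_iff.mp hfe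
      dsimp only at hi1 hi2
      have hpq : p' < q' := hbnd p' q' hy'
      rcases hflip p q hx' h1 with ⟨hpa, hq2, hq3⟩ | ⟨hqc, hp2, hp3⟩
      · have hpc : p' = c := by
          have h := congrArg t hi1.symm; rw [htt, hpa, hta] at h; exact h
        have hq : t q' = q' := htx q' (by omega) (by omega)
        rw [hq] at hi2
        omega
      · have hqa : q' = a := by
          have h := congrArg t hi2.symm; rw [htt, hqc, htc] at h; exact h
        have hp : t p' = p' := htx p' (by omega) (by omega)
        rw [hp] at hi1
        omega
    · rw [if_neg h1, if_neg h2] at hfe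
      exact hfe
  have hssub : I'.image f ⊂ I := by
    rw [Finset.ssubset_iff_of_subset (Finset.image_subset_iff.mpr hmapsto)]
    refine ⟨(a, c), ?_, ?_⟩
    · simp only [hI, mem_filter, mem_product, mem_Icc]
      exact ⟨⟨⟨ha, by omega⟩, by omega, hcn⟩, hac, hval⟩
    · intro hmem
      obtain ⟨⟨p, q⟩, hpq', hfe⟩ := Finset.mem_image.mp hmem
      have hlt : p < q := hbnd p q hpq'
      rw [hfeval] at hfe
      by_cases h1 : t p < t q
      · rw [if_pos h1] at hfe
        obtain ⟨hi1, hi2⟩ := Prod.ext_iff.mp hfe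
        dsimp only at hi1 hi2
        have hpc : p = c := by
          have h := congrArg t hi1; rw [htt, hta] at h; exact h
        have hqa : q = a := by
          have h := congrArg t hi2; rw [htt, htc] at h; exact h
        omega
      · rw [if_neg h1] at hfe
        obtain ⟨hi1, hi2⟩ := Prod.ext_iff.mp hfe
        dsimp only at hi1 hi2
        rcases hflip p q hpq' h1 with ⟨hpa, hq2, hq3⟩ | ⟨hqc, hp2, hp3⟩ <;> omega
  rw [hI'def, hIdef, ← Finset.card_image_of_injOn hinj]
  exact Finset.card_lt_card hssub


lemma partialProd_succ (u : Equiv.Perm ℕ) (b c : ℕ → ℕ) (j : ℕ) :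
    partialProd u b c (j + 1) = partialProd u b c j * Equiv.swap (b (j + 1)) (c (j + 1)) := rfl

/-- If position `q` is not touched by any of the first `j` transpositions, the value is `u q`. -/
lemma partialProd_untouched (u : Equiv.Perm ℕ) (b c : ℕ → ℕ) (q : ℕ) :
    ∀ j, (∀ k, 1 ≤ k → k ≤ j → b k ≠ q ∧ c k ≠ q) → partialProd u b c j q = u q := by
  intro j
  induction j with
  | zero => intro _; rfl
  | succ j ih =>
    intro h
    rw [partialProd_succ, Equiv.Perm.mul_apply,
      Equiv.swap_apply_of_ne_of_ne (Ne.symm (h (j + 1) (by omega) le_rfl).1)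
        (Ne.symm (h (j + 1) (by omega) le_rfl).2)]
    exact ih (fun k h1 h2 => h k h1 (by omega))

/-- If position `q` is not touched after step `k`, the value freezes. -/
lemma partialProd_frozen (u : Equiv.Perm ℕ) (b c : ℕ → ℕ) (q k : ℕ) :
    ∀ j, k ≤ j → (∀ k', k < k' → k' ≤ j → b k' ≠ q ∧ c k' ≠ q) →
      partialProd u b c j q = partialProd u b c k q := by
  intro j hkj
  induction j, hkj using Nat.le_induction with
  | base => intro _; rfl
  | succ j hj ih =>
    intro h
    rw [partialProd_succ, Equiv.Perm.mul_apply,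
      Equiv.swap_apply_of_ne_of_ne (Ne.symm (h (j + 1) (by omega) le_rfl).1)
        (Ne.symm (h (j + 1) (by omega) le_rfl).2)]
    exact ih (fun k' h1 h2 => h k' h1 (by omega))

/-- The partial products fix everything outside `[1, n]`. -/
lemma partialProd_fix (u : Equiv.Perm ℕ) (b c : ℕ → ℕ) (n l : ℕ)
    (hu : ∀ q, ¬(1 ≤ q ∧ q ≤ n) → u q = q)
    (hb : ∀ k, 1 ≤ k → k ≤ l → (1 ≤ b k ∧ b k ≤ n) ∧ (1 ≤ c k ∧ c k ≤ n)) :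
    ∀ j, j ≤ l → ∀ q, ¬(1 ≤ q ∧ q ≤ n) → partialProd u b c j q = q := by
  intro j
  induction j with
  | zero => intro _ q hq; exact hu q hq
  | succ j ih =>
    intro hjl q hq
    rw [partialProd_succ, Equiv.Perm.mul_apply, Equiv.swap_apply_of_ne_of_ne]
    · exact ih (by omega) q hq
    · intro h; rw [h] at hq; exact hq (hb (j+1) (by omega) hjl).1
    · intro h; rw [h] at hq; exact hq (hb (j+1) (by omega) hjl).2

/-- A permutation fixing the complement of `[1, n]` maps `[1, n]` into itself. -/
lemma perm_apply_mem (σ : Equiv.Perm ℕ) (n : ℕ) (h : ∀ q, ¬(1 ≤ q ∧ q ≤ n) → σ q = q)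
    (q : ℕ) (hq : 1 ≤ q ∧ q ≤ n) : 1 ≤ σ q ∧ σ q ≤ n := by
  by_contra hc
  have h1 := h _ hc
  have := σ.injective h1
  rw [this] at hc
  exact hc hq

section Main

open Finset

theorem basis_lemma_schubert_aux (n m l : ℕ) (E : Type*) [AddCommGroup E] [Module ℂ E]
    (e : ℕ → E) (hbasis : ∃ bE : Module.Basis (Fin n) ℂ E, ∀ i : Fin n, bE i = e ((i : ℕ) + 1))
    (u w : Equiv.Perm ℕ)
    (hufix : ∀ i, ¬(1 ≤ i ∧ i ≤ n) → u i = i) (hwfix : ∀ i, ¬(1 ≤ i ∧ i ≤ n) → w i = i)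
    (hl1 : 1 ≤ l) (hmn : m < n)
    (b c : ℕ → ℕ)
    (hbc : ∀ k, 1 ≤ k → k ≤ l → 1 ≤ b k ∧ b k ≤ m ∧ m < c k ∧ c k ≤ n)
    (hwP : w = partialProd u b c l)
    (hlen : ∀ k, 1 ≤ k → k ≤ l → invLen n (partialProd u b c k) = invLen n u + k)
    (hbdist : ∀ k k', 1 ≤ k → k < k' → k' ≤ l → b k ≠ b k')
    (x : ℕ → E) (lam mu : ℕ → ℂ)
    (hx1 : ∀ i, 1 ≤ i → i ≤ m → u i = w i → x i = e (u i))
    (hx2 : ∀ i, 1 ≤ i → i ≤ m → u i ≠ w i →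
      lam i ≠ 0 ∧ mu i ≠ 0 ∧ x i = lam i • e (u i) + mu i • e (w i))
    (hx3 : ∀ i, m < i → i ≤ n → x i = e (u i) ∨ x i = e (w i))
    (V F : ℕ → Submodule ℂ E)
    (hV : ∀ i, V i = Submodule.span ℂ (x '' Set.Icc 1 i))
    (hF : ∀ p, F p = Submodule.span ℂ (e '' {q | n - p < q ∧ q ≤ n}))
    (i p : ℕ) (hi : i ≤ n) (hp : p ≤ n) :
    ((Finset.Icc 1 i).filter (fun t => n - p < u t)).card ≤
      Module.finrank ℂ ↥(V i ⊓ F p) := by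
  classical
  obtain ⟨bE, hbE⟩ := hbasis
  haveI : FiniteDimensional ℂ E := Module.Finite.of_basis bE
  set P : ℕ → Equiv.Perm ℕ := partialProd u b c with hP
  -- basic ranges
  have hun : ∀ t, 1 ≤ t → t ≤ n → 1 ≤ u t ∧ u t ≤ n := fun t h1 h2 =>
    perm_apply_mem u n hufix t ⟨h1, h2⟩
  have hwn : ∀ t, 1 ≤ t → t ≤ n → 1 ≤ w t ∧ w t ≤ n := fun t h1 h2 =>
    perm_apply_mem w n hwfix t ⟨h1, h2⟩
  -- b is injective on [1, l]
  have binj : ∀ k k', 1 ≤ k → k ≤ l → 1 ≤ k' → k' ≤ l → b k = b k' → k = k' := by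
    intro k k' h1 h2 h3 h4 h5
    rcases lt_trichotomy k k' with h | h | h
    · exact absurd h5 (hbdist k k' h1 h h4)
    · exact h
    · exact absurd h5.symm (hbdist k' k h3 h h2)
  -- L1 : positions b k are untouched before step k
  have L1 : ∀ k, 1 ≤ k → k ≤ l → ∀ j, j < k → P j (b k) = u (b k) := by
    intro k h1 h2 j hj
    apply partialProd_untouched
    intro k' hk1 hk2
    constructor
    · exact hbdist k' k hk1 (by omega) h2
    · have hb1 := (hbc k h1 h2).2.1
      have hc1 := (hbc k' hk1 (by omega)).2.2.1
      omega
  -- Lfreeze : positions b k are frozen after step k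
  have Lfreeze : ∀ k, 1 ≤ k → k ≤ l → ∀ j, k ≤ j → j ≤ l → P j (b k) = P k (b k) := by
    intro k h1 h2 j hj1 hj2
    apply partialProd_frozen
    · exact hj1
    · intro k' hk1 hk2
      constructor
      · exact (hbdist k k' h1 hk1 (by omega)).symm
      · have hb1 := (hbc k h1 h2).2.1
        have hc1 := (hbc k' (by omega) (by omega)).2.2.1
        omega
  -- Lw : the w-value of b k
  have Lw : ∀ k, 1 ≤ k → k ≤ l → w (b k) = P (k - 1) (c k) := by
    intro k h1 h2
    obtain ⟨k', rfl⟩ : ∃ k', k = k' + 1 := ⟨k - 1, by omega⟩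
    have h3 : w (b (k' + 1)) = P (k' + 1) (b (k' + 1)) := by
      rw [hwP]
      exact Lfreeze (k' + 1) h1 h2 l h2 le_rfl
    rw [h3]
    show partialProd u b c (k' + 1) (b (k' + 1)) = _
    rw [partialProd_succ, Equiv.Perm.mul_apply, Equiv.swap_apply_left]
    simp only [Nat.add_sub_cancel]
    rfl
  -- L5 : the key inequality from the length condition
  have L5 : ∀ k, 1 ≤ k → k ≤ l → P (k - 1) (b k) < P (k - 1) (c k) := by
    intro k h1 h2
    have hlt : invLen n (P (k - 1)) < invLen n (P k) := by
      have hprev : invLen n (P (k - 1)) = invLen n u + (k - 1) := by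
        rcases Nat.eq_or_lt_of_le h1 with h | h
        · rw [← h]
          rfl
        · exact hlen (k - 1) (by omega) (by omega)
      rw [hprev, hlen k h1 h2]
      omega
    by_contra hcon
    push_neg at hcon
    rcases Nat.eq_or_lt_of_le hcon with h | h
    · have := (P (k - 1)).injective h
      have hb := (hbc k h1 h2).2.1
      have hc := (hbc k h1 h2).2.2.1
      omega
    · have hbb := hbc k h1 h2
      have hswap := invLen_mul_swap_lt_s9 n (P (k - 1)) (b k) (c k) hbb.1 hbb.2.2.2
        (by omega) h
      obtain ⟨k', rfl⟩ : ∃ k', k = k' + 1 := ⟨k - 1, by omega⟩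
      simp only [Nat.add_sub_cancel] at hswap
      have : P (k' + 1) = P k' * Equiv.swap (b (k' + 1)) (c (k' + 1)) := partialProd_succ u b c k'
      rw [this] at hlt
      simp only [Nat.add_sub_cancel] at hlt
      omega
  -- Lmon : touched positions strictly increase
  have Lmon : ∀ k, 1 ≤ k → k ≤ l → u (b k) < w (b k) := by
    intro k h1 h2
    rw [Lw k h1 h2, ← L1 k h1 h2 (k - 1) (by omega)]
    exact L5 k h1 h2
  -- Ltouch : positions ≤ m with u ≠ w are touched
  have Ltouch : ∀ t, 1 ≤ t → t ≤ m → u t ≠ w t → ∃ k, 1 ≤ k ∧ k ≤ l ∧ b k = t := by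
    intro t h1 h2 h3
    by_contra hcon
    push_neg at hcon
    apply h3
    rw [hwP]
    symm
    apply partialProd_untouched
    intro k hk1 hk2
    refine ⟨hcon k hk1 hk2, ?_⟩
    have := (hbc k hk1 hk2).2.2.1
    omega
  -- L7 : ordering of the edges
  have L7 : ∀ k k', 1 ≤ k → k ≤ l → 1 ≤ k' → k' ≤ l → u (b k) = w (b k') → k < k' := by
    intro k k' h1 h2 h3 h4 h5
    by_contra hcon
    push_neg at hcon
    rw [Lw k' h3 h4, ← L1 k h1 h2 (k' - 1) (by omega)] at h5
    have := (P (k' - 1)).injective h5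
    have hb := (hbc k h1 h2).2.1
    have hc := (hbc k' h3 h4).2.2.1
    omega
  -- membership helpers
  have heF : ∀ q, n - p < q → q ≤ n → e q ∈ F p := by
    intro q h1 h2
    rw [hF]
    exact Submodule.subset_span ⟨q, ⟨h1, h2⟩, rfl⟩
  have hxV : ∀ t, 1 ≤ t → t ≤ i → x t ∈ V i := by
    intro t h1 h2
    rw [hV]
    exact Submodule.subset_span ⟨t, ⟨h1, h2⟩, rfl⟩
  -- the sweep: for positions beyond m, all partial values give vectors in V i
  have SweepC : ∀ t, m < t → t ≤ i → e (u t) ∈ V i := by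
    intro t htm hti
    rcases hx3 t htm (by omega) with hcase | hcase
    · rw [← hcase]; exact hxV t (by omega) hti
    · have key : ∀ j, j ≤ l → e (P (l - j) t) ∈ V i := by
        intro j
        induction j with
        | zero =>
          intro _
          simp only [Nat.sub_zero]
          have : P l t = w t := by rw [hwP]
          rw [this, ← hcase]
          exact hxV t (by omega) hti
        | succ j ih =>
          intro hjl
          have ihv := ih (by omega)
          obtain ⟨k', hk'⟩ : ∃ k', l - j = k' + 1 := ⟨l - j - 1, by omega⟩
          have hgoal : l - (j + 1) = k' := by omega
          rw [hgoal]
          rw [hk'] at ihv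
          have hk1 : 1 ≤ k' + 1 := by omega
          have hk2 : k' + 1 ≤ l := by omega
          have hPs : P (k' + 1) t = P k' (Equiv.swap (b (k' + 1)) (c (k' + 1)) t) := by
            show partialProd u b c (k' + 1) t = _
            rw [partialProd_succ, Equiv.Perm.mul_apply]
          by_cases hct : c (k' + 1) = t
          · -- touched step: use the edge vector at b (k'+1)
            set K := k' + 1 with hK
            have hswapt : Equiv.swap (b K) (c K) t = b K := by
              rw [← hct]; exact Equiv.swap_apply_right _ _
            have hPK : P K t = u (b K) := by
              rw [hPs, hswapt]
              exact L1 K hk1 hk2 k' (by omega)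
            have hPk' : P k' t = w (b K) := by
              rw [Lw K hk1 hk2, ← hct]
              simp only [hK, Nat.add_sub_cancel]
            have hbm := hbc K hk1 hk2
            have hne : u (b K) ≠ w (b K) := Nat.ne_of_lt (Lmon K hk1 hk2)
            obtain ⟨hlam, hmu, hxeq⟩ := hx2 (b K) hbm.1 hbm.2.1 hne
            have hxVK : x (b K) ∈ V i := hxV (b K) hbm.1 (by omega)
            have hEq : e (w (b K)) = (mu (b K))⁻¹ • (x (b K) - lam (b K) • e (u (b K))) := by
              rw [hxeq, add_sub_cancel_left, smul_smul, inv_mul_cancel₀ hmu, one_smul]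
            rw [hPk', hEq]
            have hPKe : e (u (b K)) ∈ V i := by rw [← hPK]; exact ihv
            exact Submodule.smul_mem _ _ (Submodule.sub_mem _ hxVK (Submodule.smul_mem _ _ hPKe))
          · -- untouched step
            have hbt : b (k' + 1) ≠ t := by
              have := (hbc (k' + 1) hk1 hk2).2.1
              omega
            have : P (k' + 1) t = P k' t := by
              rw [hPs, Equiv.swap_apply_of_ne_of_ne (Ne.symm hbt) (Ne.symm hct)]
            rw [← this]
            exact ihv
      have := key l le_rfl
      simp only [Nat.sub_self] at this
      exact this
  -- the vector family and the pivot order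
  set y : ℕ → E := fun t => if t ≤ m then x t else e (u t) with hy
  set κ : ℕ → ℕ := fun t => if h : ∃ k, 1 ≤ k ∧ k ≤ l ∧ b k = t then h.choose else 0 with hκ
  have hκedge : ∀ k, 1 ≤ k → k ≤ l → κ (b k) = k := by
    intro k h1 h2
    have hex : ∃ k0, 1 ≤ k0 ∧ k0 ≤ l ∧ b k0 = b k := ⟨k, h1, h2, rfl⟩
    rw [hκ]
    simp only [dif_pos hex]
    obtain ⟨hc1, hc2, hc3⟩ := hex.choose_spec
    exact binj _ k hc1 hc2 h1 h2 hc3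
  have hκ0 : ∀ t, m < t → κ t = 0 := by
    intro t ht
    rw [hκ]
    apply dif_neg
    rintro ⟨k, hk1, hk2, hk3⟩
    have := (hbc k hk1 hk2).2.1
    omega
  -- coordinate functionals
  set Cf : ℕ → E →ₗ[ℂ] ℂ := fun q =>
    if h : 1 ≤ q ∧ q ≤ n then bE.coord ⟨q - 1, by omega⟩ else 0 with hCf
  have Cf_e : ∀ q q', 1 ≤ q → q ≤ n → 1 ≤ q' → q' ≤ n →
      Cf q (e q') = if q' = q then 1 else 0 := by
    intro q q' hq1 hq2 hq'1 hq'2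
    have heq : e q' = bE ⟨q' - 1, by omega⟩ := by
      rw [hbE ⟨q' - 1, by omega⟩]
      congr 1
      show q' = q' - 1 + 1
      omega
    rw [hCf]
    simp only [dif_pos (⟨hq1, hq2⟩ : 1 ≤ q ∧ q ≤ n)]
    rw [heq, Module.Basis.coord_apply, Module.Basis.repr_self, Finsupp.single_apply]
    by_cases h : q' = q
    · rw [if_pos h, if_pos (by subst h; rfl)]
    · rw [if_neg h, if_neg (fun hc => h (by
        have h2 : q' - 1 = q - 1 := Fin.mk_eq_mk.mp hc
        omega))]
  -- the counted set
  set T : Finset ℕ := (Finset.Icc 1 i).filter (fun t => n - p < u t) with hT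
  have hmemT : ∀ t ∈ T, 1 ≤ t ∧ t ≤ i ∧ n - p < u t := by
    intro t ht
    rw [hT, Finset.mem_filter, Finset.mem_Icc] at ht
    exact ⟨ht.1.1, ht.1.2, ht.2⟩
  -- membership of the family in V i ⊓ F p
  have hyV : ∀ t ∈ T, y t ∈ V i ⊓ F p := by
    intro t ht
    obtain ⟨ht1, hti, htu⟩ := hmemT t ht
    have htn : t ≤ n := le_trans hti hi
    have huB := hun t ht1 htn
    by_cases htm : t ≤ m
    · have hyt : y t = x t := if_pos htm
      by_cases huw : u t = w t
      · have hxt := hx1 t ht1 htm huw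
        refine ⟨?_, ?_⟩
        · rw [hyt]; exact hxV t ht1 hti
        · rw [hyt, hxt]; exact heF (u t) htu huB.2
      · obtain ⟨hlam, hmu, hxeq⟩ := hx2 t ht1 htm huw
        obtain ⟨k, hk1, hk2, hk3⟩ := Ltouch t ht1 htm huw
        have hmono : u t < w t := hk3 ▸ Lmon k hk1 hk2
        have hwB := hwn t ht1 htn
        constructor
        · rw [hyt]; exact hxV t ht1 hti
        · rw [hyt, hxeq]
          exact Submodule.add_mem _ (Submodule.smul_mem _ _ (heF (u t) htu huB.2))
            (Submodule.smul_mem _ _ (heF (w t) (by omega) hwB.2))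
    · have hyt : y t = e (u t) := if_neg htm
      rw [hyt]
      exact ⟨SweepC t (by omega) hti, heF (u t) htu huB.2⟩
  -- support of the family
  have hsupp : ∀ t ∈ T, ∀ q, 1 ≤ q → q ≤ n → Cf q (y t) ≠ 0 →
      q = u t ∨ (t ≤ m ∧ u t ≠ w t ∧ q = w t) := by
    intro t ht q hq1 hq2 hCfq
    obtain ⟨ht1, hti, htu⟩ := hmemT t ht
    have htn : t ≤ n := le_trans hti hi
    have huB := hun t ht1 htn
    by_cases htm : t ≤ m
    · have hyt : y t = x t := if_pos htm
      by_cases huw : u t = w t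
      · left
        rw [hyt, hx1 t ht1 htm huw, Cf_e q (u t) hq1 hq2 huB.1 huB.2] at hCfq
        by_contra hne
        rw [if_neg (fun hc => hne hc.symm)] at hCfq
        exact hCfq rfl
      · obtain ⟨hlam, hmu, hxeq⟩ := hx2 t ht1 htm huw
        have hwB := hwn t ht1 htn
        rw [hyt, hxeq, map_add, map_smul, map_smul,
          Cf_e q (u t) hq1 hq2 huB.1 huB.2, Cf_e q (w t) hq1 hq2 hwB.1 hwB.2] at hCfq
        by_cases h1 : u t = q
        · exact Or.inl h1.symm
        · by_cases h2 : w t = q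
          · exact Or.inr ⟨htm, huw, h2.symm⟩
          · exfalso
            rw [if_neg h1, if_neg h2] at hCfq
            simp at hCfq
    · left
      have hyt : y t = e (u t) := if_neg htm
      rw [hyt, Cf_e q (u t) hq1 hq2 huB.1 huB.2] at hCfq
      by_contra hne
      rw [if_neg (fun hc => hne hc.symm)] at hCfq
      exact hCfq rfl
  -- pivots are nonzero
  have hpiv : ∀ t ∈ T, Cf (u t) (y t) ≠ 0 := by
    intro t ht
    obtain ⟨ht1, hti, htu⟩ := hmemT t ht
    have htn : t ≤ n := le_trans hti hi
    have huB := hun t ht1 htn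
    by_cases htm : t ≤ m
    · have hyt : y t = x t := if_pos htm
      by_cases huw : u t = w t
      · rw [hyt, hx1 t ht1 htm huw, Cf_e (u t) (u t) huB.1 huB.2 huB.1 huB.2, if_pos rfl]
        exact one_ne_zero
      · obtain ⟨hlam, hmu, hxeq⟩ := hx2 t ht1 htm huw
        have hwB := hwn t ht1 htn
        rw [hyt, hxeq, map_add, map_smul, map_smul,
          Cf_e (u t) (u t) huB.1 huB.2 huB.1 huB.2,
          Cf_e (u t) (w t) huB.1 huB.2 hwB.1 hwB.2,
          if_pos rfl, if_neg (fun hc => huw hc.symm)]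
        simpa using hlam
    · have hyt : y t = e (u t) := if_neg htm
      rw [hyt, Cf_e (u t) (u t) huB.1 huB.2 huB.1 huB.2, if_pos rfl]
      exact one_ne_zero
  -- triangularity with respect to κ
  have F3 : ∀ t ∈ T, ∀ t' ∈ T, t' ≠ t → Cf (u t) (y t') ≠ 0 → κ t < κ t' := by
    intro t ht t' ht' hne hCft
    obtain ⟨ht1, hti, htu⟩ := hmemT t ht
    obtain ⟨ht'1, ht'i, ht'u⟩ := hmemT t' ht'
    have htn : t ≤ n := le_trans hti hi
    have huB := hun t ht1 htn
    rcases hsupp t' ht' (u t) huB.1 huB.2 hCft with h | ⟨ht'm, ht'uw, hwt'⟩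
    · exact absurd (u.injective h.symm) hne
    · obtain ⟨k', hk'1, hk'2, hk'3⟩ := Ltouch t' ht'1 ht'm ht'uw
      have hκt' : κ t' = k' := by rw [← hk'3, hκedge k' hk'1 hk'2]
      by_cases htm : t ≤ m
      · by_cases huw : u t = w t
        · exfalso
          apply hne
          exact w.injective (by rw [← hwt', ← huw])
        · obtain ⟨k, hk1, hk2, hk3⟩ := Ltouch t ht1 htm huw
          have hκt : κ t = k := by rw [← hk3, hκedge k hk1 hk2]
          rw [hκt, hκt']
          exact L7 k k' hk1 hk2 hk'1 hk'2 (by rw [hk3, hk'3, ← hwt'])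
      · rw [hκ0 t (by omega), hκt']
        omega
  -- conclude by linear independence
  have hTcard : T.card = Fintype.card {t // t ∈ T} := (Fintype.card_coe T).symm
  set z : {t // t ∈ T} → ↥(V i ⊓ F p) := fun t => ⟨y ↑t, hyV ↑t t.2⟩ with hz
  have hli : LinearIndependent ℂ z := by
    rw [Fintype.linearIndependent_iff]
    intro g hg
    by_contra hcon
    push_neg at hcon
    obtain ⟨t1, ht1g⟩ := hcon
    set S : Finset {t // t ∈ T} := Finset.univ.filter (fun t => g t ≠ 0) with hS
    have hSne : S.Nonempty := ⟨t1, by rw [hS, Finset.mem_filter]; exact ⟨Finset.mem_univ _, ht1g⟩⟩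
    obtain ⟨t₀, ht₀S, hmax⟩ := S.exists_max_image (fun t => κ ↑t) hSne
    have ht₀g : g t₀ ≠ 0 := by
      rw [hS, Finset.mem_filter] at ht₀S
      exact ht₀S.2
    have hE : (∑ t : {t // t ∈ T}, g t • y ↑t) = 0 := by
      have h0 := congrArg (Submodule.subtype (V i ⊓ F p)) hg
      rw [map_sum, map_zero] at h0
      simpa using h0
    have hC := congrArg (Cf (u ↑t₀)) hE
    rw [map_sum, map_zero] at hC
    have hterm : ∀ t ∈ Finset.univ, t ≠ t₀ → Cf (u ↑t₀) (g t • y ↑t) = 0 := by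
      intro t _ hne'
      rw [map_smul, smul_eq_mul]
      by_cases hg' : g t = 0
      · rw [hg', zero_mul]
      · by_cases hc0 : Cf (u ↑t₀) (y ↑t) = 0
        · rw [hc0, mul_zero]
        · exfalso
          have hvne : (↑t : ℕ) ≠ ↑t₀ := fun hc => hne' (Subtype.ext hc)
          have hlt := F3 ↑t₀ t₀.2 ↑t t.2 hvne hc0
          have hle := hmax t (by rw [hS, Finset.mem_filter]; exact ⟨Finset.mem_univ _, hg'⟩)
          omega
    rw [Finset.sum_eq_single_of_mem t₀ (Finset.mem_univ _) hterm, map_smul, smul_eq_mul] at hC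
    exact ht₀g (by
      rcases mul_eq_zero.mp hC with h | h
      · exact h
      · exact absurd h (hpiv ↑t₀ t₀.2))
  calc T.card = Fintype.card {t // t ∈ T} := hTcard
    _ ≤ Module.finrank ℂ ↥(V i ⊓ F p) := hli.fintype_card_le_finrank

end Main

theorem basis_lemma_schubert (n r m : ℕ) (E : Type*) [AddCommGroup E] [Module ℂ E]
    (e : ℕ → E) (hbasis : ∃ bE : Module.Basis (Fin n) ℂ E, ∀ i : Fin n, bE i = e ((i : ℕ) + 1))
    (u w : Equiv.Perm ℕ)
    (hufix : ∀ i, ¬(1 ≤ i ∧ i ≤ n) → u i = i) (hwfix : ∀ i, ¬(1 ≤ i ∧ i ≤ n) → w i = i)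
    (hr : 1 ≤ r) (hrm : r ≤ m) (hmn : m < n)
    (harrow : PieriArrow n r m u w)
    (x : ℕ → E) (lam mu : ℕ → ℂ)
    (hx1 : ∀ i, 1 ≤ i → i ≤ m → u i = w i → x i = e (u i))
    (hx2 : ∀ i, 1 ≤ i → i ≤ m → u i ≠ w i →
      lam i ≠ 0 ∧ mu i ≠ 0 ∧ x i = lam i • e (u i) + mu i • e (w i))
    (hx3 : ∀ i, m < i → i ≤ n → x i = e (u i) ∨ x i = e (w i))
    -- the flag `V` and the reference flag `F` (with `F p = ⟨e_{n+1-p}, …, e_n⟩`)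
    (V F : ℕ → Submodule ℂ E)
    (hV : ∀ i, V i = Submodule.span ℂ (x '' Set.Icc 1 i))
    (hF : ∀ p, F p = Submodule.span ℂ (e '' {q | n - p < q ∧ q ≤ n})) :
    ∀ i p, i ≤ n → p ≤ n →
      ((Finset.Icc 1 i).filter (fun t => n - p < u t)).card ≤
        Module.finrank ℂ ↥(V i ⊓ F p) := by
  intro i p hi hp
  obtain ⟨b, c, hbc, hwP, hlen, hbdist⟩ := harrow
  exact basis_lemma_schubert_aux n m (m - r + 1) E e hbasis u w hufix hwfix (by omega) hmn
    b c hbc hwP hlen hbdist x lam mu hx1 hx2 hx3 V F hV hF i p hi hp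
end

section
/- Let f : P^1 → Gr(m, E) be a morphism of degree d to the Grassmannian of m-planes in E, and suppose the kernel K of the curve f(P^1) (the largest subspace of E contained in f(s:t) for all (s:t)) has dimension m - d. Then there exist x_1,...,x_d, y_1,...,y_d ∈ E such that f(s:t) = K ⊕ span(s x_1 + t y_1, ..., s x_d + t y_d) for all (s:t) ∈ P^1. -/
/-- `f` (viewed as a function of the homogeneous coordinates `(s : t)` of `ℙ¹`)
is a regular map `ℙ¹ → Gr(m, E)` of degree `d`: it is given by `m` vector-valued
binary forms `gᵢ(s,t) = ∑_j s^j t^{eᵢ-j} • v i j` of degrees `eᵢ` with `∑ eᵢ = d`,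
whose values are linearly independent at every point of `ℙ¹` (so that the Plücker
coordinates are forms of degree `d` with no common zero). -/
def IsGrMap {E : Type*} [AddCommGroup E] [Module ℂ E]
    (m d : ℕ) (f : ℂ → ℂ → Submodule ℂ E) : Prop :=
  ∃ (e : Fin m → ℕ) (v : Fin m → ℕ → E),
    (∑ i, e i) = d ∧
    ∀ s t : ℂ, (s, t) ≠ (0, 0) →
      LinearIndependent ℂ
        (fun i : Fin m => ∑ j ∈ Finset.range (e i + 1), (s ^ j * t ^ (e i - j)) • v i j) ∧
      f s t = Submodule.span ℂ
        (Set.range (fun i : Fin m => ∑ j ∈ Finset.range (e i + 1), (s ^ j * t ^ (e i - j)) • v i j))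

theorem minimal_kernel_curve (E : Type*) [AddCommGroup E] [Module ℂ E]
    [FiniteDimensional ℂ E]
    (m d : ℕ) (hdm : d ≤ m) (f : ℂ → ℂ → Submodule ℂ E)
    (hf : IsGrMap m d f)
    -- the kernel of the image curve: the largest subspace contained in every `f(s:t)`
    (K : Submodule ℂ E)
    (hK : K = ⨅ p : {p : ℂ × ℂ // p ≠ (0, 0)}, f p.1.1 p.1.2)
    (hdimK : Module.finrank ℂ K = m - d) :
    ∃ x y : Fin d → E, ∀ s t : ℂ, (s, t) ≠ (0, 0) →
      f s t = K ⊔ Submodule.span ℂ (Set.range (fun i : Fin d => s • x i + t • y i)) ∧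
      Disjoint K (Submodule.span ℂ (Set.range (fun i : Fin d => s • x i + t • y i))) := by
  classical
  obtain ⟨e, v, hsum, hall⟩ := hf
  set g : ℂ → ℂ → Fin m → E := fun s t i =>
    ∑ j ∈ Finset.range (e i + 1), (s ^ j * t ^ (e i - j)) • v i j with hgdef
  have hall' : ∀ s t : ℂ, (s, t) ≠ (0, 0) →
      LinearIndependent ℂ (g s t) ∧ f s t = Submodule.span ℂ (Set.range (g s t)) := hall
  have hgS : ∀ (s t : ℂ) (i : Fin m), e i = 0 → g s t i = v i 0 := by
    intro s t i hi
    simp [hgdef, hi]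
  have hgP : ∀ (s t : ℂ) (i : Fin m), e i = 1 → g s t i = t • v i 0 + s • v i 1 := by
    intro s t i hi
    simp [hgdef, hi, Finset.sum_range_succ]
  -- constants lie in K
  have hvK : ∀ i : Fin m, e i = 0 → v i 0 ∈ K := by
    intro i hi
    rw [hK, Submodule.mem_iInf]
    intro p
    rw [(hall' p.1.1 p.1.2 p.2).2, ← hgS p.1.1 p.1.2 i hi]
    exact Submodule.subset_span ⟨i, rfl⟩
  -- counting
  set P : Finset (Fin m) := Finset.univ.filter (fun i => ¬ e i = 0) with hPdef
  have hPsum_le : ∑ i ∈ P, e i ≤ d := by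
    rw [← hsum]
    exact Finset.sum_le_sum_of_subset (Finset.subset_univ _)
  have hcard_le_sum : P.card ≤ ∑ i ∈ P, e i := by
    rw [Finset.card_eq_sum_ones]
    refine Finset.sum_le_sum ?_
    intro i hi
    have := (Finset.mem_filter.mp hi).2
    omega
  have hPm : P.card ≤ m := le_trans (Finset.card_le_card (Finset.subset_univ _)) (by simp)
  -- the constants are independent
  have h11 := (hall' 1 1 (by simp)).1
  have hSlin : LinearIndependent ℂ (fun i : {i : Fin m // e i = 0} => v i.1 0) := by
    have hcomp := h11.comp (Subtype.val : {i : Fin m // e i = 0} → Fin m) Subtype.val_injective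
    have heqf : (g 1 1 ∘ (Subtype.val : {i : Fin m // e i = 0} → Fin m)) =
        fun i : {i : Fin m // e i = 0} => v i.1 0 := funext fun i => hgS 1 1 i.1 i.2
    rwa [heqf] at hcomp
  have hsplit : (Finset.univ.filter (fun i : Fin m => e i = 0)).card + P.card = m := by
    have h := Finset.card_filter_add_card_filter_not (s := (Finset.univ : Finset (Fin m)))
      (p := fun i : Fin m => e i = 0)
    simp only [Finset.card_univ, Fintype.card_fin] at h
    rw [hPdef]
    exact h
  have hcardS : Fintype.card {i : Fin m // e i = 0} = m - P.card := by
    rw [Fintype.card_subtype]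
    omega
  have hspanS_le : Submodule.span ℂ (Set.range (fun i : {i : Fin m // e i = 0} => v i.1 0)) ≤ K := by
    rw [Submodule.span_le]
    rintro x ⟨i, rfl⟩
    exact hvK i.1 i.2
  have hfinS : Module.finrank ℂ
      (Submodule.span ℂ (Set.range (fun i : {i : Fin m // e i = 0} => v i.1 0)))
      = m - P.card := by
    rw [finrank_span_eq_card hSlin, hcardS]
  have hle : m - P.card ≤ m - d := by
    rw [← hfinS, ← hdimK]
    exact Submodule.finrank_mono hspanS_le
  have hPd : P.card = d := by omega
  -- each positive degree equals 1
  have hsum_eq : ∑ i ∈ P, e i = ∑ i ∈ P, 1 := by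
    have : ∑ i ∈ P, (1 : ℕ) = P.card := by simp
    omega
  have he1 : ∀ i ∈ P, e i = 1 := by
    intro i hi
    have h := (Finset.sum_eq_sum_iff_of_le (f := fun i => (1:ℕ)) (g := e)
      (fun i hi => by
        have h2 := (Finset.mem_filter.mp hi).2
        show (1:ℕ) ≤ e i
        omega)).mp hsum_eq.symm
    exact (h i hi).symm
  -- K equals the span of the constants
  have hKspan : Submodule.span ℂ (Set.range (fun i : {i : Fin m // e i = 0} => v i.1 0)) = K := by
    apply Submodule.eq_of_le_of_finrank_eq hspanS_le
    rw [hfinS, hdimK, hPd]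
  -- the bijection Fin d ≃ P
  have hcardP : Fintype.card {i : Fin m // ¬ e i = 0} = d := by
    rw [Fintype.card_subtype]; exact hPd
  let σ : Fin d ≃ {i : Fin m // ¬ e i = 0} := (Fintype.equivFinOfCardEq hcardP).symm
  refine ⟨fun k => v (σ k).1 1, fun k => v (σ k).1 0, ?_⟩
  intro s t hst
  obtain ⟨hli, heq⟩ := hall' s t hst
  set Sset : Set (Fin m) := {i | e i = 0} with hSsetdef
  have hgSP : ∀ i : {i : Fin m // ¬ e i = 0}, g s t i.1 = t • v i.1 0 + s • v i.1 1 := by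
    intro i
    exact hgP s t i.1 (he1 i.1 (Finset.mem_filter.mpr ⟨Finset.mem_univ _, i.2⟩))
  -- images of the two index sets
  have himS : g s t '' Sset = Set.range (fun i : {i : Fin m // e i = 0} => v i.1 0) := by
    rw [Set.image_eq_range]
    exact congrArg Set.range (funext fun i => hgS s t i.1 i.2)
  have himP : g s t '' Ssetᶜ =
      Set.range (fun k : Fin d => s • v (σ k).1 1 + t • v (σ k).1 0) := by
    rw [Set.image_eq_range]
    have h1 : (fun i : ↥Ssetᶜ => g s t i.1) =
        (fun i : {i : Fin m // ¬ e i = 0} => s • v i.1 1 + t • v i.1 0) ∘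
          (fun i : ↥Ssetᶜ => (⟨i.1, i.2⟩ : {i : Fin m // ¬ e i = 0})) := by
      funext i
      simpa [add_comm] using hgSP ⟨i.1, i.2⟩
    rw [h1, Set.range_comp]
    have h2 : Set.range (fun i : ↥Ssetᶜ => (⟨i.1, i.2⟩ : {i : Fin m // ¬ e i = 0})) =
        Set.univ := by
      ext i; simp only [Set.mem_univ, iff_true]
      exact ⟨⟨i.1, i.2⟩, rfl⟩
    rw [h2, Set.image_univ]
    exact (σ.surjective.range_comp _).symm
  have hrange : Set.range (g s t) = g s t '' Sset ∪ g s t '' Ssetᶜ := by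
    rw [← Set.image_union, Set.union_compl_self, Set.image_univ]
  constructor
  · rw [heq, hrange, Submodule.span_union, himS, himP, hKspan]
  · have hdisj := hli.disjoint_span_image (s := Sset) (t := Ssetᶜ) disjoint_compl_right
    rw [himS, himP, hKspan] at hdisj
    exact hdisj
end
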